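/- arXiv:1901.09605 — 3 statements merged into one kernel-verified Lean document; each statement's English description precedes it below -/
import Mathlib

section
/- Let G be a bipartite graph with vertex classes A and B, each of size n, such that every U ⊆ A with |U| ≤ ⌈n/2⌉ satisfies |N_G(U)| ≥ |U| and every U ⊆ B with |U| ≤ ⌈n/2⌉ satisfies |N_G(U)| ≥ |U|. Then G contains a matching from A to B, i.e., a perfect matching saturating both A and B. -/
/-- The neighbourhood of a vertex set `U` in a graph `G`. -/
def nbrSet {V : Type*} (G : SimpleGraph V) (U : Set V) : Set V :=
  {v | ∃ u ∈ U, G.Adj u v}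

lemma nbrSet_mono {V : Type*} (G : SimpleGraph V) {U W : Set V} (h : U ⊆ W) :
    nbrSet G U ⊆ nbrSet G W := fun v ⟨u, hu, ha⟩ => ⟨u, h hu, ha⟩

/-- **Proposition 2.9.**  Let `G` be a bipartite graph with vertex classes `A` and `B`, each of
size `n`, such that every `U ⊆ A` or `U ⊆ B` with `|U| ≤ ⌈n/2⌉` satisfies `|N(U)| ≥ |U|`.
Then `G` contains a matching from `A` to `B` saturating both sides. -/
theorem bipartite_matching {V : Type*} [Fintype V] [DecidableEq V] (G : SimpleGraph V)
    (A B : Set V) (n : ℕ) (hA : A.ncard = n) (hB : B.ncard = n) (hdisj : Disjoint A B)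
    (hbip : ∀ u v : V, G.Adj u v → (u ∈ A ∧ v ∈ B) ∨ (u ∈ B ∧ v ∈ A))
    (hHallA : ∀ U ⊆ A, U.ncard ≤ (n + 1) / 2 → U.ncard ≤ (nbrSet G U).ncard)
    (hHallB : ∀ U ⊆ B, U.ncard ≤ (n + 1) / 2 → U.ncard ≤ (nbrSet G U).ncard) :
    ∃ φ : V → V, Set.InjOn φ A ∧ Set.MapsTo φ A B ∧ ∀ a ∈ A, G.Adj a (φ a) := by
  classical
  have hAB : ∀ a ∈ A, ∀ v, G.Adj a v → v ∈ B := by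
    intro a ha v hadj
    rcases hbip a v hadj with ⟨_, hv⟩ | ⟨hB', _⟩
    · exact hv
    · exact absurd hB' (Set.disjoint_left.mp hdisj ha)
  have hBA : ∀ b ∈ B, ∀ v, G.Adj b v → v ∈ A := by
    intro b hb v hadj
    rcases hbip b v hadj with ⟨hA', _⟩ | ⟨_, hv⟩
    · exact absurd hb (Set.disjoint_left.mp hdisj hA')
    · exact hv
  -- full Hall condition on A
  have hFull : ∀ U ⊆ A, U.ncard ≤ (nbrSet G U).ncard := by
    intro U hUA
    by_cases hsmall : U.ncard ≤ (n + 1) / 2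
    · exact hHallA U hUA hsmall
    push_neg at hsmall
    have hNU_B : nbrSet G U ⊆ B := fun v ⟨u, hu, ha⟩ => hAB u (hUA hu) v ha
    set W : Set V := B \ nbrSet G U with hW
    have hWB : W ⊆ B := Set.diff_subset
    have hNW : nbrSet G W ⊆ A \ U := by
      rintro a ⟨w, hw, haw⟩
      refine ⟨hBA w (hWB hw) a haw, ?_⟩
      intro haU
      exact hw.2 ⟨a, haU, haw.symm⟩
    have hUn : U.ncard ≤ n := by
      rw [← hA]; exact Set.ncard_le_ncard hUA (Set.toFinite _)
    have hAU : (A \ U).ncard = n - U.ncard := by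
      rw [Set.ncard_diff hUA (Set.toFinite _), hA]
    -- W is small
    have hWsmall : W.ncard ≤ (n + 1) / 2 := by
      by_contra hbig
      push_neg at hbig
      obtain ⟨W', hW'W, hW'card⟩ := Set.exists_subset_card_eq hbig.le
      have h1 := hHallB W' (hW'W.trans hWB) hW'card.le
      have h2 : (nbrSet G W').ncard ≤ (A \ U).ncard :=
        Set.ncard_le_ncard ((nbrSet_mono G hW'W).trans hNW) (Set.toFinite _)
      rw [hW'card, hAU] at *
      omega
    have h3 := hHallB W hWB hWsmall
    have h4 : (nbrSet G W).ncard ≤ (A \ U).ncard :=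
      Set.ncard_le_ncard hNW (Set.toFinite _)
    have hWcard : W.ncard = n - (nbrSet G U).ncard := by
      rw [hW, Set.ncard_diff hNU_B (Set.toFinite _), hB]
    have hNUB : (nbrSet G U).ncard ≤ n := by
      rw [← hB]; exact Set.ncard_le_ncard hNU_B (Set.toFinite _)
    rw [hAU] at h4
    omega
  -- Hall's theorem
  let t : A → Finset V := fun a => {v | G.Adj a v}.toFinset
  have hHall : ∀ s : Finset A, s.card ≤ (s.biUnion t).card := by
    intro s
    set U : Set V := (↑) '' (s : Set A) with hU
    have hUA : U ⊆ A := by rintro v ⟨a, _, rfl⟩; exact a.2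
    have hcard : U.ncard = s.card := by
      rw [hU, Set.ncard_image_of_injective _ Subtype.coe_injective, Set.ncard_coe_finset]
    have hbu : (s.biUnion t : Set V) = nbrSet G U := by
      ext v
      simp only [Finset.coe_biUnion, Set.mem_iUnion, Finset.mem_coe, Finset.mem_biUnion,
        nbrSet, Set.mem_setOf_eq, t, Set.mem_toFinset]
      constructor
      · rintro ⟨a, ha, hadj⟩; exact ⟨a, ⟨a, ha, rfl⟩, hadj⟩
      · rintro ⟨u, ⟨a, ha, rfl⟩, hadj⟩; exact ⟨a, ha, hadj⟩
    have := hFull U hUA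
    rwa [hcard, ← hbu, Set.ncard_coe_finset] at this
  obtain ⟨f, hfinj, hft⟩ := (Finset.all_card_le_biUnion_card_iff_exists_injective t).mp hHall
  refine ⟨fun v => if h : v ∈ A then f ⟨v, h⟩ else v, ?_, ?_, ?_⟩
  · intro x hx y hy hxy
    simp only [dif_pos hx, dif_pos hy] at hxy
    exact Subtype.ext_iff.mp (hfinj hxy)
  · intro a ha
    simp only [dif_pos ha]
    have := hft ⟨a, ha⟩
    rw [Set.mem_toFinset] at this
    exact hAB a ha _ this
  · intro a ha
    simp only [dif_pos ha]
    have := hft ⟨a, ha⟩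
    rwa [Set.mem_toFinset] at this
end

section
/- Let ε>0 and let p = p(n) satisfy p ≥ 1/n, and set m = log^{[4]} n/p. Then, with probability 1 − o(n^{-3}) (i.e., n³ times the failure probability tends to 0 as n→∞), the random digraph D = D(n,p) has the following property: for all disjoint sets A,B ⊆ [n] with |A| ≥ m/2 and |B| ≥ n/3 and each j∈{+,−}, (1−ε)p|A||B| ≤ e^j_D(A,B) ≤ (1+ε)p|A||B|. -/
open Finset

/-- The type of directed edges (ordered pairs of distinct vertices) on `Fin n`. -/
abbrev Eg (n : ℕ) := {p : Fin n × Fin n // p.1 ≠ p.2}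

/-- `drel D u v` means the directed edge from `u` to `v` belongs to the digraph `D`. -/
def drel {n : ℕ} (D : Finset (Eg n)) (u v : Fin n) : Prop :=
  ∃ h : u ≠ v, (⟨(u, v), h⟩ : Eg n) ∈ D

/-- The out-degree of a vertex. -/
noncomputable def outdeg {n : ℕ} (D : Finset (Eg n)) (v : Fin n) : ℕ :=
  {w | drel D v w}.ncard

/-- The in-degree of a vertex. -/
noncomputable def indeg {n : ℕ} (D : Finset (Eg n)) (v : Fin n) : ℕ :=
  {w | drel D w v}.ncard

/-- The number of out-neighbours of `v` lying in `B`. -/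
noncomputable def outdegIn {n : ℕ} (D : Finset (Eg n)) (v : Fin n) (B : Set (Fin n)) : ℕ :=
  {w ∈ B | drel D v w}.ncard

/-- The number of in-neighbours of `v` lying in `B`. -/
noncomputable def indegIn {n : ℕ} (D : Finset (Eg n)) (v : Fin n) (B : Set (Fin n)) : ℕ :=
  {w ∈ B | drel D w v}.ncard

/-- The out-neighbourhood of a set `U` (vertices outside `U` receiving an edge from `U`). -/
def Nout {n : ℕ} (D : Finset (Eg n)) (U : Set (Fin n)) : Set (Fin n) :=
  {w | w ∉ U ∧ ∃ u ∈ U, drel D u w}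

/-- The in-neighbourhood of a set `U` (vertices outside `U` sending an edge to `U`). -/
def Nin {n : ℕ} (D : Finset (Eg n)) (U : Set (Fin n)) : Set (Fin n) :=
  {w | w ∉ U ∧ ∃ u ∈ U, drel D w u}

/-- `l` is (the cyclic vertex sequence of) a directed cycle in the digraph `D`. -/
def IsDiCycle {n : ℕ} (D : Finset (Eg n)) (l : List (Fin n)) : Prop :=
  2 ≤ l.length ∧ l.Nodup ∧ ∀ h : l ≠ [], List.Chain' (drel D) (l ++ [l.head h])

/-- A digraph is Hamiltonian if it contains a directed cycle through every vertex. -/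
def Hamiltonian {n : ℕ} (D : Finset (Eg n)) : Prop :=
  ∃ l : List (Fin n), IsDiCycle D l ∧ ∀ v : Fin n, v ∈ l

open scoped Classical in
/-- The probability that the binomial random digraph `D(n,p)` (each of the `n(n-1)` possible
directed edges present independently with probability `p`) satisfies the property `P`. -/
noncomputable def dnpProb (n : ℕ) (p : ℝ) (P : Finset (Eg n) → Prop) : ℝ :=
  ∑ D : Finset (Eg n),
    if P D then p ^ D.card * (1 - p) ^ (Fintype.card (Eg n) - D.card) else 0

/-- `e^+(A,B)`: the number of edges of `D` directed from `A` to `B`. -/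
noncomputable def eOut {n : ℕ} (D : Finset (Eg n)) (A B : Set (Fin n)) : ℕ :=
  {e : Eg n | e ∈ D ∧ e.1.1 ∈ A ∧ e.1.2 ∈ B}.ncard

/-!
For fixed disjoint `A`, `B` the edges from `A` to `B` form a binomial random subset of the
`|A||B|` possible edges, with mean `μ = p|A||B| ≥ n log^[4] n / 6`. Its exponential moment is
`(1 - p + p e^θ)^{|A||B|} ≤ exp (μ (θ + θ²))` for `|θ| ≤ 1`, so Markov's inequality with
`θ = ±t`, `t = min (ε/2) 1`, bounds each tail by `exp (-(ε - t) t μ)`. A union bound over the at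
most `4^n` pairs `(A, B)` then gives failure probability `O(4^n exp (-c n log^[4] n)) = O(e^{-n})`.
-/

open Real

theorem one_sub_add_mul_exp_pow_le {p θ : ℝ} (hp0 : 0 ≤ p) (hp1 : p ≤ 1) (hθ : |θ| ≤ 1) (m : ℕ) :
    (1 - p + p * exp θ) ^ m ≤ exp (m * (p * (θ + θ ^ 2))) := by
  have hexp : exp θ ≤ 1 + θ + θ ^ 2 := by
    linarith [(abs_le.mp (abs_exp_sub_one_sub_id_le hθ)).2]
  have hbase : 1 - p + p * exp θ ≤ exp (p * (θ + θ ^ 2)) := by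
    nlinarith [add_one_le_exp (p * (θ + θ ^ 2))]
  rw [exp_nat_mul]
  exact pow_le_pow_left₀ (by nlinarith [exp_pos θ]) hbase m

namespace BinomialSubset

variable {α : Type*} [Fintype α]

noncomputable def weight (p : ℝ) (D : Finset α) : ℝ :=
  p ^ #D * (1 - p) ^ (Fintype.card α - #D)

open scoped Classical in
noncomputable def prob (p : ℝ) (P : Finset α → Prop) : ℝ :=
  ∑ D, if P D then weight p D else 0

variable {p : ℝ}

theorem weight_nonneg (hp0 : 0 ≤ p) (hp1 : p ≤ 1) (D : Finset α) : 0 ≤ weight p D := by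
  unfold weight
  have : 0 ≤ 1 - p := by linarith
  positivity

theorem sum_weight_mul_pow [DecidableEq α] (p x : ℝ) (S : Finset α) :
    ∑ D, weight p D * x ^ #(D ∩ S) = (1 - p + p * x) ^ #S := by
  have hfactor : ∀ D : Finset α, weight p D * x ^ #(D ∩ S) =
      (∏ e ∈ D, p * if e ∈ S then x else 1) * ∏ _e ∈ univ \ D, (1 - p) := by
    intro D
    rw [prod_mul_distrib, prod_ite_mem, prod_const, prod_const, prod_const,
      card_univ_sdiff, weight]
    ring
  rw [sum_congr rfl fun D _ => hfactor D, ← powerset_univ, ← prod_add,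
    ← prod_mul_prod_compl S]
  have hS : ∀ e ∈ S, (p * if e ∈ S then x else 1) + (1 - p) = 1 - p + p * x := by
    intro e he; rw [if_pos he]; ring
  have hSc : ∀ e ∈ Sᶜ, (p * if e ∈ S then x else 1) + (1 - p) = 1 := by
    intro e he; rw [if_neg (mem_compl.mp he)]; ring
  rw [prod_congr rfl hS, prod_congr rfl hSc, prod_const, prod_const_one, mul_one]

theorem sum_weight (p : ℝ) : ∑ D : Finset α, weight p D = 1 := by
  classical
  simpa using sum_weight_mul_pow (α := α) p 1 ∅

theorem prob_nonneg (hp0 : 0 ≤ p) (hp1 : p ≤ 1) (P : Finset α → Prop) : 0 ≤ prob p P := by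
  classical
  exact sum_nonneg fun D _ => by split_ifs <;> simp [weight_nonneg hp0 hp1]

theorem one_sub_prob (p : ℝ) (P : Finset α → Prop) : 1 - prob p P = prob p (¬P ·) := by
  classical
  rw [sub_eq_iff_eq_add, prob, prob, ← sum_add_distrib, ← sum_weight (α := α) p]
  exact sum_congr rfl fun D _ => by split_ifs <;> simp_all

theorem prob_mono (hp0 : 0 ≤ p) (hp1 : p ≤ 1) {P Q : Finset α → Prop} (h : ∀ D, P D → Q D) :
    prob p P ≤ prob p Q := by
  classical
  refine sum_le_sum fun D _ => ?_
  split_ifs with hP hQ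
  exacts [le_rfl, absurd (h D hP) hQ, weight_nonneg hp0 hp1 D, le_rfl]

theorem prob_or_le (hp0 : 0 ≤ p) (hp1 : p ≤ 1) (P Q : Finset α → Prop) :
    prob p (fun D => P D ∨ Q D) ≤ prob p P + prob p Q := by
  classical
  rw [prob, prob, prob, ← sum_add_distrib]
  refine sum_le_sum fun D _ => ?_
  have := weight_nonneg hp0 hp1 D
  split_ifs <;> simp_all

theorem prob_exists_le (hp0 : 0 ≤ p) (hp1 : p ≤ 1) {ι : Type*} (I : Finset ι)
    (P : ι → Finset α → Prop) :
    prob p (fun D => ∃ i ∈ I, P i D) ≤ ∑ i ∈ I, prob p (P i) := by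
  classical
  induction I using Finset.induction_on with
  | empty => simp [prob]
  | insert i I hi ih =>
    rw [sum_insert hi]
    calc prob p (fun D => ∃ j ∈ insert i I, P j D)
        = prob p (fun D => P i D ∨ ∃ j ∈ I, P j D) := by simp only [exists_mem_insert]
      _ ≤ prob p (P i) + prob p (fun D => ∃ j ∈ I, P j D) := prob_or_le hp0 hp1 _ _
      _ ≤ _ := by gcongr

theorem prob_le_sum_mul (hp0 : 0 ≤ p) (hp1 : p ≤ 1) {P : Finset α → Prop} {g : Finset α → ℝ}
    (hg0 : ∀ D, 0 ≤ g D) (hg : ∀ D, P D → 1 ≤ g D) :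
    prob p P ≤ ∑ D, weight p D * g D := by
  classical
  refine sum_le_sum fun D _ => ?_
  have := weight_nonneg hp0 hp1 D
  split_ifs with hP
  · exact le_mul_of_one_le_right this (hg D hP)
  · exact mul_nonneg this (hg0 D)

section Chernoff

variable [DecidableEq α]

theorem prob_exp_tail_le (hp0 : 0 ≤ p) (hp1 : p ≤ 1) (θ a : ℝ) (S : Finset α) :
    prob p (fun D => θ * a ≤ θ * #(D ∩ S)) ≤ exp (-(θ * a)) * (1 - p + p * exp θ) ^ #S := by
  have hmarkov : ∀ D : Finset α, θ * a ≤ θ * #(D ∩ S) → 1 ≤ exp (-(θ * a)) * exp θ ^ #(D ∩ S) := by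
    intro D hD
    rw [← exp_nat_mul, ← exp_add]
    exact one_le_exp (by linarith)
  calc prob p (fun D => θ * a ≤ θ * #(D ∩ S))
      ≤ ∑ D, weight p D * (exp (-(θ * a)) * exp θ ^ #(D ∩ S)) :=
        prob_le_sum_mul hp0 hp1 (fun D => by positivity) hmarkov
    _ = exp (-(θ * a)) * ∑ D, weight p D * exp θ ^ #(D ∩ S) := by
        rw [mul_sum]; exact sum_congr rfl fun D _ => by ring
    _ = exp (-(θ * a)) * (1 - p + p * exp θ) ^ #S := by rw [sum_weight_mul_pow]

variable {ε t : ℝ}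

theorem prob_lower_tail_le (hp0 : 0 ≤ p) (hp1 : p ≤ 1) (ht0 : 0 ≤ t) (ht1 : t ≤ 1)
    (S : Finset α) :
    prob p (fun D => (#(D ∩ S) : ℝ) ≤ (1 - ε) * p * #S) ≤ exp (-((ε - t) * t * (p * #S))) := by
  calc prob p (fun D => (#(D ∩ S) : ℝ) ≤ (1 - ε) * p * #S)
      ≤ prob p (fun D => -t * ((1 - ε) * p * #S) ≤ -t * #(D ∩ S)) :=
        prob_mono hp0 hp1 fun D hD => by nlinarith
    _ ≤ exp (-(-t * ((1 - ε) * p * #S))) * (1 - p + p * exp (-t)) ^ #S :=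
        prob_exp_tail_le hp0 hp1 _ _ S
    _ ≤ exp (-(-t * ((1 - ε) * p * #S))) * exp (#S * (p * (-t + (-t) ^ 2))) := by
        gcongr
        exact one_sub_add_mul_exp_pow_le hp0 hp1 (by rw [abs_neg, abs_of_nonneg ht0]; exact ht1) _
    _ = exp (-((ε - t) * t * (p * #S))) := by rw [← exp_add]; ring_nf

theorem prob_upper_tail_le (hp0 : 0 ≤ p) (hp1 : p ≤ 1) (ht0 : 0 ≤ t) (ht1 : t ≤ 1)
    (S : Finset α) :
    prob p (fun D => (1 + ε) * p * #S ≤ (#(D ∩ S) : ℝ)) ≤ exp (-((ε - t) * t * (p * #S))) := by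
  calc prob p (fun D => (1 + ε) * p * #S ≤ (#(D ∩ S) : ℝ))
      ≤ prob p (fun D => t * ((1 + ε) * p * #S) ≤ t * #(D ∩ S)) :=
        prob_mono hp0 hp1 fun D hD => by nlinarith
    _ ≤ exp (-(t * ((1 + ε) * p * #S))) * (1 - p + p * exp t) ^ #S :=
        prob_exp_tail_le hp0 hp1 _ _ S
    _ ≤ exp (-(t * ((1 + ε) * p * #S))) * exp (#S * (p * (t + t ^ 2))) := by
        gcongr
        exact one_sub_add_mul_exp_pow_le hp0 hp1 (by rw [abs_of_nonneg ht0]; exact ht1) _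
    _ = exp (-((ε - t) * t * (p * #S))) := by rw [← exp_add]; ring_nf

def IsConcentrated (p ε : ℝ) (S D : Finset α) : Prop :=
  (1 - ε) * p * #S ≤ (#(D ∩ S) : ℝ) ∧ (#(D ∩ S) : ℝ) ≤ (1 + ε) * p * #S

theorem prob_not_isConcentrated_le (hp0 : 0 ≤ p) (hp1 : p ≤ 1) (ht0 : 0 ≤ t) (ht1 : t ≤ 1)
    (S : Finset α) :
    prob p (fun D => ¬IsConcentrated p ε S D) ≤ 2 * exp (-((ε - t) * t * (p * #S))) := by
  calc prob p (fun D => ¬IsConcentrated p ε S D)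
      ≤ prob p (fun D => (#(D ∩ S) : ℝ) ≤ (1 - ε) * p * #S ∨ (1 + ε) * p * #S ≤ #(D ∩ S)) :=
        prob_mono hp0 hp1 fun D hD => by
          rw [IsConcentrated, not_and_or, not_le, not_le] at hD
          exact hD.imp le_of_lt le_of_lt
    _ ≤ _ := (prob_or_le hp0 hp1 _ _).trans <| by
        linarith [prob_lower_tail_le (ε := ε) hp0 hp1 ht0 ht1 S,
          prob_upper_tail_le (ε := ε) hp0 hp1 ht0 ht1 S]

theorem prob_exists_not_isConcentrated_le (hp0 : 0 ≤ p) (hp1 : p ≤ 1) (ht0 : 0 ≤ t)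
    (ht1 : t ≤ 1) (htε : t ≤ ε) {ι : Type*} (I : Finset ι) (S : ι → Finset α) {M : ℝ}
    (hM : ∀ i ∈ I, M ≤ p * #(S i)) :
    prob p (fun D => ∃ i ∈ I, ¬IsConcentrated p ε (S i) D)
      ≤ #I * (2 * exp (-((ε - t) * t * M))) := by
  refine (prob_exists_le hp0 hp1 I _).trans ?_
  rw [← nsmul_eq_mul]
  refine sum_le_card_nsmul _ _ _ fun i hi => ?_
  refine (prob_not_isConcentrated_le hp0 hp1 ht0 ht1 _).trans ?_
  gcongr
  exact hM i hi

end Chernoff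

end BinomialSubset

open BinomialSubset

section Digraph

variable {n : ℕ}

theorem dnpProb_eq_prob (p : ℝ) (P : Finset (Eg n) → Prop) :
    dnpProb n p P = prob p P := rfl

open scoped Classical in
noncomputable def edgesFromTo (A B : Set (Fin n)) : Finset (Eg n) :=
  {e | e.1.1 ∈ A ∧ e.1.2 ∈ B}

theorem eOut_eq_card_inter (D : Finset (Eg n)) (A B : Set (Fin n)) :
    eOut D A B = #(D ∩ edgesFromTo A B) := by
  rw [eOut, ← Set.ncard_coe_finset]
  congr 1
  ext e
  simp [edgesFromTo]

theorem card_edgesFromTo {A B : Set (Fin n)} (h : Disjoint A B) :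
    #(edgesFromTo A B) = A.ncard * B.ncard := by
  have himage : Subtype.val '' ({e | e.1.1 ∈ A ∧ e.1.2 ∈ B} : Set (Eg n)) = A ×ˢ B := by
    ext q
    refine ⟨?_, fun ⟨hu, hv⟩ => ⟨⟨q, h.ne_of_mem hu hv⟩, ⟨hu, hv⟩, rfl⟩⟩
    rintro ⟨e, he, rfl⟩
    exact he
  rw [← Set.ncard_prod, ← himage, Set.ncard_image_of_injective _ Subtype.val_injective,
    ← Set.ncard_coe_finset]
  congr 1
  ext e
  simp [edgesFromTo]

open scoped Classical in
noncomputable def heavyPairs (n : ℕ) (p M : ℝ) : Finset (Set (Fin n) × Set (Fin n)) :=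
  {XY | Disjoint XY.1 XY.2 ∧ M ≤ p * (XY.1.ncard * XY.2.ncard)}

theorem mem_heavyPairs {p M : ℝ} {XY : Set (Fin n) × Set (Fin n)} :
    XY ∈ heavyPairs n p M ↔ Disjoint XY.1 XY.2 ∧ M ≤ p * (XY.1.ncard * XY.2.ncard) := by
  simp [heavyPairs]

theorem card_heavyPairs_le (p M : ℝ) : (#(heavyPairs n p M) : ℝ) ≤ 4 ^ n := by
  have hcard : Fintype.card (Set (Fin n) × Set (Fin n)) = 4 ^ n := by
    simp [Fintype.card_set, ← mul_pow]
  exact_mod_cast hcard ▸ card_le_univ _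

def EdgeCountsConcentrated (n : ℕ) (p ε L : ℝ) (D : Finset (Eg n)) : Prop :=
  ∀ A B : Set (Fin n), Disjoint A B → L / p / 2 ≤ (A.ncard : ℝ) → (n : ℝ) / 3 ≤ (B.ncard : ℝ) →
    ((1 - ε) * p * A.ncard * B.ncard ≤ (eOut D A B : ℝ) ∧
      (eOut D A B : ℝ) ≤ (1 + ε) * p * A.ncard * B.ncard) ∧
    ((1 - ε) * p * A.ncard * B.ncard ≤ (eOut D B A : ℝ) ∧
      (eOut D B A : ℝ) ≤ (1 + ε) * p * A.ncard * B.ncard)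

theorem edgeCountsConcentrated_of_forall_heavyPairs {p ε L : ℝ} (hp : 0 < p) {D : Finset (Eg n)}
    (h : ∀ XY ∈ heavyPairs n p (L * n / 6), IsConcentrated p ε (edgesFromTo XY.1 XY.2) D) :
    EdgeCountsConcentrated n p ε L D := by
  intro A B hAB hA hB
  have hpA : L / 2 ≤ p * A.ncard := by
    rw [div_div, div_le_iff₀ (by positivity)] at hA
    linarith
  have hM : L * n / 6 ≤ p * (A.ncard * B.ncard) := by
    nlinarith [mul_le_mul hpA hB (by positivity) (by positivity)]
  have hAB' := h (A, B) (mem_heavyPairs.mpr ⟨hAB, hM⟩)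
  have hBA' := h (B, A) (mem_heavyPairs.mpr ⟨hAB.symm, by rwa [mul_comm (B.ncard : ℝ)]⟩)
  simp only [IsConcentrated, card_edgesFromTo hAB, card_edgesFromTo hAB.symm] at hAB' hBA'
  simp only [eOut_eq_card_inter]
  push_cast at hAB' hBA'
  refine ⟨⟨?_, ?_⟩, ?_, ?_⟩ <;> linarith

theorem one_sub_dnpProb_edgeCountsConcentrated_le {p ε t : ℝ} (hp0 : 0 < p) (hp1 : p ≤ 1)
    (ht0 : 0 ≤ t) (ht1 : t ≤ 1) (htε : t ≤ ε) (L : ℝ) :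
    1 - dnpProb n p (EdgeCountsConcentrated n p ε L)
      ≤ 4 ^ n * (2 * exp (-((ε - t) * t * (L * n / 6)))) := by
  rw [dnpProb_eq_prob, one_sub_prob]
  calc prob p (fun D => ¬EdgeCountsConcentrated n p ε L D)
      ≤ prob p (fun D => ∃ XY ∈ heavyPairs n p (L * n / 6),
          ¬IsConcentrated p ε (edgesFromTo XY.1 XY.2) D) :=
        prob_mono hp0.le hp1 fun D hD => by
          contrapose! hD
          exact edgeCountsConcentrated_of_forall_heavyPairs hp0 hD
    _ ≤ #(heavyPairs n p (L * n / 6)) * (2 * exp (-((ε - t) * t * (L * n / 6)))) :=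
        prob_exists_not_isConcentrated_le hp0.le hp1 ht0 ht1 htε _ _ fun XY hXY => by
          rw [card_edgesFromTo (mem_heavyPairs.mp hXY).1]
          exact_mod_cast (mem_heavyPairs.mp hXY).2
    _ ≤ 4 ^ n * (2 * exp (-((ε - t) * t * (L * n / 6)))) := by
        gcongr
        exact card_heavyPairs_le p _

end Digraph

theorem four_pow_mul_exp_le (n : ℕ) {K : ℝ} (hK : log 4 + 1 ≤ K) :
    (4 : ℝ) ^ n * exp (-(K * n)) ≤ exp (-n) := by
  rw [← exp_log (by norm_num : (0 : ℝ) < 4), ← exp_nat_mul, ← exp_add]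
  gcongr
  nlinarith [(n.cast_nonneg : (0 : ℝ) ≤ n)]

/-- **Proposition 7.4** (edge counts between large sets in `D(n,p)`). -/
theorem edges_between_sets (ε : ℝ) (hε : 0 < ε) (p : ℕ → ℝ)
    (hp : ∀ n : ℕ, 1 / (n : ℝ) ≤ p n) (hp1 : ∀ n : ℕ, p n ≤ 1) :
    Filter.Tendsto
      (fun n : ℕ => (n : ℝ) ^ 3 * (1 - dnpProb n (p n) (fun D : Finset (Eg n) =>
        ∀ A B : Set (Fin n), Disjoint A B →
          -- |A| ≥ m/2 with m = log^[4] n / p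
          Real.log (Real.log (Real.log (Real.log n))) / p n / 2 ≤ (A.ncard : ℝ) →
          -- |B| ≥ n/3
          (n : ℝ) / 3 ≤ (B.ncard : ℝ) →
          ((1 - ε) * p n * A.ncard * B.ncard ≤ (eOut D A B : ℝ) ∧
            (eOut D A B : ℝ) ≤ (1 + ε) * p n * A.ncard * B.ncard) ∧
          ((1 - ε) * p n * A.ncard * B.ncard ≤ (eOut D B A : ℝ) ∧
            (eOut D B A : ℝ) ≤ (1 + ε) * p n * A.ncard * B.ncard))))
      Filter.atTop (nhds 0) := by
  set L : ℕ → ℝ := fun n => log (log (log (log n)))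
  set t := min (ε / 2) 1
  have ht0 : 0 < t := lt_min (by positivity) one_pos
  have htε : t < ε := (min_le_left _ _).trans_lt (by linarith)
  have hc : 0 < (ε - t) * t := mul_pos (by linarith) ht0
  have hL : Filter.Tendsto L Filter.atTop Filter.atTop :=
    tendsto_log_atTop.comp <| tendsto_log_atTop.comp <| tendsto_log_atTop.comp <|
      tendsto_log_atTop.comp tendsto_natCast_atTop_atTop
  have hp0 : ∀ n, 0 ≤ p n := fun n => (by positivity : 0 ≤ 1 / (n : ℝ)).trans (hp n)
  refine squeeze_zero' (g := fun n : ℕ => 2 * ((n : ℝ) ^ 3 * exp (-n)))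
    (Filter.Eventually.of_forall fun n => ?_) ?_ ?_
  · rw [dnpProb_eq_prob, one_sub_prob]
    exact mul_nonneg (by positivity) (prob_nonneg (hp0 n) (hp1 n) _)
  · filter_upwards [hL.eventually_ge_atTop (6 * (log 4 + 1) / ((ε - t) * t)),
      Filter.eventually_ge_atTop 1] with n hLn hn
    have hpn : 0 < p n := (by positivity : 0 < 1 / (n : ℝ)).trans_le (hp n)
    have hK : log 4 + 1 ≤ (ε - t) * t * L n / 6 := by
      rw [div_le_iff₀ hc] at hLn
      linarith
    calc (n : ℝ) ^ 3 * (1 - dnpProb n (p n) (EdgeCountsConcentrated n (p n) ε (L n)))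
        ≤ n ^ 3 * (4 ^ n * (2 * exp (-((ε - t) * t * (L n * n / 6))))) := by
          gcongr
          exact one_sub_dnpProb_edgeCountsConcentrated_le hpn (hp1 n) ht0.le
            (min_le_right _ _) htε.le _
      _ = 2 * (n ^ 3 * (4 ^ n * exp (-((ε - t) * t * L n / 6 * n)))) := by ring_nf
      _ ≤ 2 * (n ^ 3 * exp (-n)) := by
          gcongr
          exact four_pow_mul_exp_le n hK
  · simpa using ((tendsto_pow_mul_exp_neg_atTop_nhds_zero 3).comp
      tendsto_natCast_atTop_atTop).const_mul 2
end

section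
/- Let p = 7·log n/(8n). Then, almost surely, the random digraph D = D(n,p) has the following property, where S = {v ∈ [n] : d^+_D(v) < log n/20 or d^−_D(v) < log n/20}: there are no S-paths and no S-cycles in D, and |S| ≤ n^{1/3}. -/
/-!
A vertex is low with probability at most `2 ℙ(Bin(n - O(1), p) ≤ log n / 20) ≤ log n · n^(-27/40)`.
For a fixed candidate S-path or S-cycle on `L ≤ 5` vertices, the events "consecutive vertices are
adjacent" and "the designated vertices have few edges to the rest of the graph" depend on pairwise
disjoint sets of potential edges, hence are independent; the pattern therefore appears with
probability at most `(2p)^(#edges)` times the low-degree probabilities. Summing over the at most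
`n^L` vertex sequences gives `O(log⁶ n · n^(-7/20))` for S-paths and `O(log⁵ n · n^(-27/40))` for
S-cycles, and Markov's inequality gives `ℙ(|S| > n^(1/3)) ≤ 2 log n · n^(-1/120)`.
-/

open Finset

/-- The underlying (undirected) adjacency of a digraph. -/
def urel {n : ℕ} (D : Finset (Eg n)) (u v : Fin n) : Prop := drel D u v ∨ drel D v u

/-- An `S`-path: a path of length at most 4 in `D` (edges in any orientation) starting and
ending at distinct vertices of `S`. -/
def IsSPath {n : ℕ} (D : Finset (Eg n)) (S : Set (Fin n)) (l : List (Fin n)) : Prop :=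
  l.Nodup ∧ 2 ≤ l.length ∧ l.length ≤ 5 ∧ List.Chain' (urel D) l ∧
    ∀ h : l ≠ [], l.head h ∈ S ∧ l.getLast h ∈ S

/-- An `S`-cycle: a cycle of length at most 4 in `D` (edges in any orientation; a cycle of
length 2 consisting of two distinct oppositely-directed edges is permitted) containing a vertex
of `S`. -/
def IsSCycle {n : ℕ} (D : Finset (Eg n)) (S : Set (Fin n)) (l : List (Fin n)) : Prop :=
  l.Nodup ∧ (∃ v ∈ l, v ∈ S) ∧
    ((∃ a b : Fin n, l = [a, b] ∧ drel D a b ∧ drel D b a) ∨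
      (3 ≤ l.length ∧ l.length ≤ 4 ∧
        ∀ h : l ≠ [], List.Chain' (urel D) (l ++ [l.head h])))

/-- The set of vertices of small in- or out-degree. -/
noncomputable def lowSet (n : ℕ) (D : Finset (Eg n)) : Set (Fin n) :=
  {v | (outdeg D v : ℝ) < Real.log n / 20 ∨ (indeg D v : ℝ) < Real.log n / 20}

section RandomSubset

variable {α : Type*} {p : ℝ}

open scoped Classical in
/-- The probability that the `p`-random subset of `U` (each element kept independently with
probability `p`) satisfies `Q`. -/
noncomputable def subsetProb (p : ℝ) (U : Finset α) (Q : Finset α → Prop) : ℝ :=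
  ∑ A ∈ U.powerset, if Q A then p ^ A.card * (1 - p) ^ (U.card - A.card) else 0

lemma subsetProb_weight_nonneg (h0 : 0 ≤ p) (h1 : p ≤ 1) (a b : ℕ) :
    0 ≤ p ^ a * (1 - p) ^ b :=
  mul_nonneg (pow_nonneg h0 _) (pow_nonneg (by linarith) _)

lemma subsetProb_nonneg (h0 : 0 ≤ p) (h1 : p ≤ 1) (U : Finset α) (Q : Finset α → Prop) :
    0 ≤ subsetProb p U Q :=
  Finset.sum_nonneg fun _ _ => by
    split_ifs
    exacts [subsetProb_weight_nonneg h0 h1 _ _, le_rfl]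

lemma subsetProb_congr {U : Finset α} {Q R : Finset α → Prop} (h : ∀ A ⊆ U, (Q A ↔ R A)) :
    subsetProb p U Q = subsetProb p U R :=
  Finset.sum_congr rfl fun A hA => by rw [propext (h A (Finset.mem_powerset.1 hA))]

lemma subsetProb_mono (h0 : 0 ≤ p) (h1 : p ≤ 1) {U : Finset α} {Q R : Finset α → Prop}
    (h : ∀ A ⊆ U, Q A → R A) : subsetProb p U Q ≤ subsetProb p U R :=
  Finset.sum_le_sum fun A hA => by
    by_cases hQ : Q A
    · rw [if_pos hQ, if_pos (h A (Finset.mem_powerset.1 hA) hQ)]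
    · rw [if_neg hQ]
      split_ifs
      exacts [subsetProb_weight_nonneg h0 h1 _ _, le_rfl]

lemma subsetProb_of_forall_not {U : Finset α} {Q : Finset α → Prop} (h : ∀ A ⊆ U, ¬ Q A) :
    subsetProb p U Q = 0 :=
  Finset.sum_eq_zero fun A hA => if_neg (h A (Finset.mem_powerset.1 hA))

lemma subsetProb_true (U : Finset α) : subsetProb p U (fun _ => True) = 1 := by
  classical
  have h := Finset.prod_add (fun _ : α => p) (fun _ => 1 - p) U
  simp only [Finset.prod_const, add_sub_cancel, one_pow] at h
  refine (Finset.sum_congr rfl fun A hA => ?_).trans h.symm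
  rw [if_pos trivial, Finset.card_sdiff_of_subset (Finset.mem_powerset.1 hA)]

lemma subsetProb_le_one (h0 : 0 ≤ p) (h1 : p ≤ 1) (U : Finset α) (Q : Finset α → Prop) :
    subsetProb p U Q ≤ 1 :=
  (subsetProb_true (p := p) U) ▸ subsetProb_mono h0 h1 fun _ _ _ => trivial

lemma subsetProb_add_subsetProb_not (U : Finset α) (Q : Finset α → Prop) :
    subsetProb p U Q + subsetProb p U (fun A => ¬ Q A) = 1 := by
  rw [← subsetProb_true (p := p) U, subsetProb, subsetProb, subsetProb, ← Finset.sum_add_distrib]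
  refine Finset.sum_congr rfl fun A _ => ?_
  by_cases hQ : Q A <;> simp [hQ]

open scoped Classical in
/-- Markov's inequality for the number of events `R i` that occur. -/
lemma mul_subsetProb_le_sum {ι : Type*} (h0 : 0 ≤ p) (h1 : p ≤ 1) {U : Finset α}
    (s : Finset ι) (R : ι → Finset α → Prop) (Q : Finset α → Prop) (t : ℝ)
    (h : ∀ A ⊆ U, Q A → t ≤ (s.filter fun i => R i A).card) :
    t * subsetProb p U Q ≤ ∑ i ∈ s, subsetProb p U (R i) := by
  unfold subsetProb
  rw [Finset.mul_sum, Finset.sum_comm]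
  refine Finset.sum_le_sum fun A hA => ?_
  rw [← Finset.sum_filter, Finset.sum_const, nsmul_eq_mul]
  by_cases hQ : Q A
  · rw [if_pos hQ]
    exact mul_le_mul_of_nonneg_right (h A (Finset.mem_powerset.1 hA) hQ)
      (subsetProb_weight_nonneg h0 h1 _ _)
  · rw [if_neg hQ, mul_zero]
    exact mul_nonneg (Nat.cast_nonneg _) (subsetProb_weight_nonneg h0 h1 _ _)

lemma subsetProb_le_sum {ι : Type*} (h0 : 0 ≤ p) (h1 : p ≤ 1) {U : Finset α}
    (s : Finset ι) (R : ι → Finset α → Prop) (Q : Finset α → Prop)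
    (h : ∀ A ⊆ U, Q A → ∃ i ∈ s, R i A) :
    subsetProb p U Q ≤ ∑ i ∈ s, subsetProb p U (R i) := by
  classical
  refine (one_mul (subsetProb p U Q)).symm.le.trans
    (mul_subsetProb_le_sum h0 h1 s R Q 1 fun A hA hQ => ?_)
  obtain ⟨i, hi, hRi⟩ := h A hA hQ
  exact_mod_cast Finset.card_pos.2 ⟨i, Finset.mem_filter.2 ⟨hi, hRi⟩⟩

lemma subsetProb_or_le (h0 : 0 ≤ p) (h1 : p ≤ 1) {U : Finset α} (Q R : Finset α → Prop) :
    subsetProb p U (fun A => Q A ∨ R A) ≤ subsetProb p U Q + subsetProb p U R := by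
  simpa using subsetProb_le_sum h0 h1 (U := U) {true, false}
    (fun b A => if b then Q A else R A) _ fun A _ h => by simpa [or_comm] using h

lemma one_sub_add_add_le_subsetProb (h0 : 0 ≤ p) (h1 : p ≤ 1)
    (U : Finset α) (P Q R : Finset α → Prop) :
    1 - (subsetProb p U P + subsetProb p U Q + subsetProb p U R)
      ≤ subsetProb p U (fun A => ¬ P A ∧ ¬ Q A ∧ ¬ R A) := by
  have hcompl := subsetProb_add_subsetProb_not (p := p) U (fun A => P A ∨ Q A ∨ R A)
  have hor := (subsetProb_or_le (U := U) h0 h1 P (fun A => Q A ∨ R A)).trans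
    (add_le_add_right (subsetProb_or_le h0 h1 Q R) _)
  simp only [not_or] at hcompl
  linarith

lemma subsetProb_exists_list_le {β : Type*} [Fintype β] (h0 : 0 ≤ p) (h1 : p ≤ 1)
    (U : Finset α) (L : ℕ) (P : List β → Finset α → Prop) (r : ℝ)
    (h : ∀ l : List β, l.length = L → subsetProb p U (P l) ≤ r) :
    subsetProb p U (fun A => ∃ l : List β, l.length = L ∧ P l A) ≤ Fintype.card β ^ L * r :=
  calc _ ≤ ∑ v : List.Vector β L, subsetProb p U (P v.1) :=
        subsetProb_le_sum h0 h1 _ _ _ fun _ _ ⟨l, hl, hP⟩ => ⟨⟨l, hl⟩, Finset.mem_univ _, hP⟩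
    _ ≤ ∑ _v : List.Vector β L, r := Finset.sum_le_sum fun v _ => h v.1 v.2
    _ = Fintype.card β ^ L * r := by simp [card_vector]

/-- The lower tail `ℙ(Bin(m, p) ≤ K)` of the binomial distribution. -/
noncomputable def binTail (p : ℝ) (m K : ℕ) : ℝ :=
  ∑ j ∈ Finset.range (K + 1), (m.choose j : ℝ) * p ^ j * (1 - p) ^ (m - j)

lemma binTail_nonneg {p : ℝ} (h0 : 0 ≤ p) (h1 : p ≤ 1) (m K : ℕ) : 0 ≤ binTail p m K :=
  Finset.sum_nonneg fun j _ => by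
    rw [mul_assoc]
    exact mul_nonneg (Nat.cast_nonneg _) (subsetProb_weight_nonneg h0 h1 _ _)

lemma subsetProb_card_le (h0 : 0 ≤ p) (h1 : p ≤ 1) (U : Finset α) (K : ℕ) :
    subsetProb p U (fun A => A.card ≤ K) ≤ binTail p U.card K := by
  classical
  have h := Finset.sum_powerset_apply_card
    (fun j => if j ≤ K then p ^ j * (1 - p) ^ (U.card - j) else 0) (x := U)
  simp only [nsmul_eq_mul, mul_ite, mul_zero, ← mul_assoc] at h
  refine ((Finset.sum_congr rfl fun A _ => ite_congr rfl (fun _ => rfl) fun _ => rfl).trans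
    h).le.trans ?_
  rw [← Finset.sum_filter, binTail]
  refine Finset.sum_le_sum_of_subset_of_nonneg (fun j hj => ?_) fun j _ _ => ?_
  · simp only [Finset.mem_filter, Finset.mem_range] at hj ⊢
    omega
  · rw [mul_assoc]
    exact mul_nonneg (Nat.cast_nonneg _) (subsetProb_weight_nonneg h0 h1 _ _)

lemma subsetProb_nonempty_le (h1 : p ≤ 1) (U : Finset α) :
    subsetProb p U (fun A => A.Nonempty) ≤ U.card * p := by
  have hempty : subsetProb p U (fun A => ¬ A.Nonempty) = (1 - p) ^ U.card := by
    rw [subsetProb, Finset.sum_eq_single ∅]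
    · simp
    · exact fun A _ hA => if_neg (by simpa [Finset.nonempty_iff_ne_empty] using hA)
    · exact fun h => absurd (Finset.empty_mem_powerset U) h
  have hbernoulli : 1 - U.card * p ≤ (1 - p) ^ U.card := by
    simpa [sub_eq_add_neg] using one_add_mul_le_pow (a := -p) (by linarith) U.card
  have := subsetProb_add_subsetProb_not (p := p) U (fun A => A.Nonempty)
  rw [hempty] at this
  linarith

lemma subsetProb_eq_self (U : Finset α) : subsetProb p U (fun A => A = U) = p ^ U.card := by
  rw [subsetProb, Finset.sum_eq_single U]
  · simp
  · exact fun A _ hA => if_neg hA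
  · exact fun h => absurd (Finset.mem_powerset_self U) h

variable [DecidableEq α]

lemma weight_eq_mul_of_subset_union {T V A : Finset α} (hTV : Disjoint T V) (hA : A ⊆ T ∪ V) :
    p ^ A.card * (1 - p) ^ ((T ∪ V).card - A.card)
      = p ^ (A ∩ T).card * (1 - p) ^ (T.card - (A ∩ T).card)
        * (p ^ (A ∩ V).card * (1 - p) ^ (V.card - (A ∩ V).card)) := by
  have hcard : A.card = (A ∩ T).card + (A ∩ V).card := by
    rw [← Finset.card_union_of_disjoint (Finset.disjoint_of_subset_left Finset.inter_subset_right
      (Finset.disjoint_of_subset_right Finset.inter_subset_right hTV)),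
      ← Finset.inter_union_distrib_left, Finset.inter_eq_left.2 hA]
  have hT : (A ∩ T).card ≤ T.card := Finset.card_le_card Finset.inter_subset_right
  have hV : (A ∩ V).card ≤ V.card := Finset.card_le_card Finset.inter_subset_right
  rw [Finset.card_union_of_disjoint hTV, hcard, pow_add, show T.card + V.card
    - ((A ∩ T).card + (A ∩ V).card) = (T.card - (A ∩ T).card) + (V.card - (A ∩ V).card) by omega,
    pow_add]
  ring

/-- Independence of events living on disjoint ground sets. -/
lemma subsetProb_union_inter_and {T V : Finset α} (hTV : Disjoint T V)
    (Q R : Finset α → Prop) :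
    subsetProb p (T ∪ V) (fun A => Q (A ∩ T) ∧ R (A ∩ V))
      = subsetProb p T Q * subsetProb p V R := by
  rw [subsetProb, subsetProb, subsetProb, Finset.sum_mul_sum, ← Finset.sum_product']
  refine Finset.sum_nbij' (fun A => (A ∩ T, A ∩ V)) (fun BC => BC.1 ∪ BC.2) ?_ ?_ ?_ ?_ ?_
  · intro A _
    simp only [Finset.mem_product, Finset.mem_powerset]
    exact ⟨Finset.inter_subset_right, Finset.inter_subset_right⟩
  · intro BC hBC
    simp only [Finset.mem_product, Finset.mem_powerset] at hBC
    exact Finset.mem_powerset.2 (Finset.union_subset_union hBC.1 hBC.2)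
  · intro A hA
    rw [← Finset.inter_union_distrib_left, Finset.inter_eq_left.2 (Finset.mem_powerset.1 hA)]
  · intro BC hBC
    simp only [Finset.mem_product, Finset.mem_powerset] at hBC
    rw [Finset.union_inter_distrib_right, Finset.union_inter_distrib_right,
      Finset.inter_eq_left.2 hBC.1, Finset.inter_eq_left.2 hBC.2,
      Finset.disjoint_iff_inter_eq_empty.1 (Finset.disjoint_of_subset_left hBC.2 hTV.symm),
      Finset.disjoint_iff_inter_eq_empty.1 (Finset.disjoint_of_subset_left hBC.1 hTV),
      Finset.union_empty, Finset.empty_union]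
  · intro A hA
    rw [weight_eq_mul_of_subset_union hTV (Finset.mem_powerset.1 hA)]
    by_cases hQ : Q (A ∩ T) <;> by_cases hR : R (A ∩ V) <;> simp [hQ, hR]

lemma subsetProb_inter_and_sdiff {U T : Finset α} (hT : T ⊆ U) (Q R : Finset α → Prop) :
    subsetProb p U (fun A => Q (A ∩ T) ∧ R (A ∩ (U \ T)))
      = subsetProb p T Q * subsetProb p (U \ T) R := by
  have h := subsetProb_union_inter_and (p := p) (Finset.disjoint_sdiff : Disjoint T (U \ T)) Q R
  rwa [Finset.union_sdiff_of_subset hT] at h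

lemma subsetProb_inter {U T : Finset α} (hT : T ⊆ U) (Q : Finset α → Prop) :
    subsetProb p U (fun A => Q (A ∩ T)) = subsetProb p T Q := by
  rw [← mul_one (subsetProb p T Q), ← subsetProb_true (p := p) (U \ T),
    ← subsetProb_inter_and_sdiff hT]
  exact subsetProb_congr fun A _ => (and_iff_left trivial).symm

lemma subsetProb_forall_inter_eq_prod {ι : Type*} [DecidableEq ι]
    (T : ι → Finset α) (Q : ι → Finset α → Prop) (s : Finset ι) {U : Finset α}
    (hU : ∀ i ∈ s, T i ⊆ U) (hs : (s : Set ι).Pairwise fun i j => Disjoint (T i) (T j)) :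
    subsetProb p U (fun A => ∀ i ∈ s, Q i (A ∩ T i)) = ∏ i ∈ s, subsetProb p (T i) (Q i) := by
  induction s using Finset.cons_induction generalizing U with
  | empty => simpa using subsetProb_true U
  | cons a s ha ih =>
    have hTa : T a ⊆ U := hU a (Finset.mem_cons_self a s)
    have hsub : ∀ i ∈ s, T i ⊆ U \ T a := fun i hi =>
      Finset.subset_sdiff.2 ⟨hU i (Finset.mem_cons_of_mem hi),
        hs (by simp [hi]) (by simp) (ne_of_mem_of_not_mem hi ha)⟩
    rw [Finset.prod_cons, ← ih hsub (hs.mono (by simp)), ← subsetProb_inter_and_sdiff hTa]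
    refine subsetProb_congr fun A _ => ?_
    simp only [Finset.forall_mem_cons]
    refine and_congr_right' (forall₂_congr fun i hi => ?_)
    rw [Finset.inter_assoc, Finset.inter_eq_right.2 (hsub i hi)]

end RandomSubset

lemma dnpProb_eq_subsetProb (n : ℕ) (p : ℝ) (P : Finset (Eg n) → Prop) :
    dnpProb n p P = subsetProb p Finset.univ P := by
  rw [dnpProb, subsetProb, Finset.powerset_univ, Finset.card_univ]

section EdgeBlocks

variable {n : ℕ}

def outEdgesOff (u : Fin n) (W : Finset (Fin n)) : Finset (Eg n) :=
  Finset.univ.filter fun e => e.1.1 = u ∧ e.1.2 ∉ W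

def inEdgesOff (u : Fin n) (W : Finset (Fin n)) : Finset (Eg n) :=
  Finset.univ.filter fun e => e.1.2 = u ∧ e.1.1 ∉ W

def lowBlock (u : Fin n) (W : Finset (Fin n)) : Finset (Eg n) :=
  outEdgesOff u W ∪ inEdgesOff u W

def edgesBetween (a b : Fin n) : Finset (Eg n) :=
  Finset.univ.filter fun e => (e.1.1 = a ∧ e.1.2 = b) ∨ (e.1.1 = b ∧ e.1.2 = a)

noncomputable def degCut (n : ℕ) : ℕ := ⌊Real.log n / 20⌋₊

/-- The part of `u ∈ lowSet n D` visible in the edges of `lowBlock u W`. -/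
def IsLowAt (u : Fin n) (W : Finset (Fin n)) (B : Finset (Eg n)) : Prop :=
  (B ∩ outEdgesOff u W).card ≤ degCut n ∨ (B ∩ inEdgesOff u W).card ≤ degCut n

lemma card_outEdgesOff {u : Fin n} {W : Finset (Fin n)} (hu : u ∈ W) :
    (outEdgesOff u W).card = n - W.card := by
  rw [show n - W.card = Wᶜ.card by rw [Finset.card_compl, Fintype.card_fin]]
  refine Finset.card_bij (fun e _ => e.1.2) (fun e he => ?_) (fun e he e' he' h => ?_)
    fun w hw => ?_ <;> simp only [outEdgesOff, Finset.mem_filter, Finset.mem_univ, true_and,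
      Finset.mem_compl] at *
  · exact he.2
  · exact Subtype.ext (Prod.ext (he.1.trans he'.1.symm) h)
  · exact ⟨⟨(u, w), fun h : u = w => hw (h ▸ hu)⟩, ⟨rfl, hw⟩, rfl⟩

lemma card_inEdgesOff {u : Fin n} {W : Finset (Fin n)} (hu : u ∈ W) :
    (inEdgesOff u W).card = n - W.card := by
  rw [show n - W.card = Wᶜ.card by rw [Finset.card_compl, Fintype.card_fin]]
  refine Finset.card_bij (fun e _ => e.1.1) (fun e he => ?_) (fun e he e' he' h => ?_)
    fun w hw => ?_ <;> simp only [inEdgesOff, Finset.mem_filter, Finset.mem_univ, true_and,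
      Finset.mem_compl] at *
  · exact he.2
  · exact Subtype.ext (Prod.ext h (he.1.trans he'.1.symm))
  · exact ⟨⟨(w, u), fun h : w = u => hw (h ▸ hu)⟩, ⟨rfl, hw⟩, rfl⟩

lemma card_inter_outEdgesOff_le_outdeg (D : Finset (Eg n)) (u : Fin n) (W : Finset (Fin n)) :
    (D ∩ outEdgesOff u W).card ≤ outdeg D u := by
  rw [outdeg, ← Set.ncard_coe_finset]
  refine Set.ncard_le_ncard_of_injOn (fun e => e.1.2) (fun e he => ?_) (fun e he e' he' h => ?_)
    (Set.toFinite _)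
  · simp only [outEdgesOff, Finset.coe_inter, Finset.coe_filter, Finset.mem_univ, true_and,
      Set.mem_inter_iff, Finset.mem_coe] at he
    obtain ⟨heD, rfl, -⟩ := he
    exact ⟨e.2, heD⟩
  · simp only [outEdgesOff, Finset.coe_inter, Finset.coe_filter, Finset.mem_univ, true_and,
      Set.mem_inter_iff, Finset.mem_coe] at he he'
    exact Subtype.ext (Prod.ext (he.2.1.trans he'.2.1.symm) h)

lemma card_inter_inEdgesOff_le_indeg (D : Finset (Eg n)) (u : Fin n) (W : Finset (Fin n)) :
    (D ∩ inEdgesOff u W).card ≤ indeg D u := by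
  rw [indeg, ← Set.ncard_coe_finset]
  refine Set.ncard_le_ncard_of_injOn (fun e => e.1.1) (fun e he => ?_) (fun e he e' he' h => ?_)
    (Set.toFinite _)
  · simp only [inEdgesOff, Finset.coe_inter, Finset.coe_filter, Finset.mem_univ, true_and,
      Set.mem_inter_iff, Finset.mem_coe] at he
    obtain ⟨heD, rfl, -⟩ := he
    exact ⟨e.2, heD⟩
  · simp only [inEdgesOff, Finset.coe_inter, Finset.coe_filter, Finset.mem_univ, true_and,
      Set.mem_inter_iff, Finset.mem_coe] at he he'
    exact Subtype.ext (Prod.ext h (he.2.1.trans he'.2.1.symm))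

lemma le_degCut_of_lt {d : ℕ} (h : (d : ℝ) < Real.log n / 20) : d ≤ degCut n :=
  Nat.le_floor h.le

lemma isLowAt_of_mem_lowSet {D : Finset (Eg n)} {u : Fin n} (W : Finset (Fin n))
    (hu : u ∈ lowSet n D) : IsLowAt u W (D ∩ lowBlock u W) := by
  rw [IsLowAt, Finset.inter_assoc, Finset.inter_assoc, lowBlock, Finset.union_inter_cancel_left,
    Finset.union_inter_cancel_right]
  rcases hu with h | h
  · exact Or.inl ((card_inter_outEdgesOff_le_outdeg D u W).trans (le_degCut_of_lt h))
  · exact Or.inr ((card_inter_inEdgesOff_le_indeg D u W).trans (le_degCut_of_lt h))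

variable {p : ℝ}

lemma subsetProb_isLowAt_le (h0 : 0 ≤ p) (h1 : p ≤ 1) {u : Fin n} {W : Finset (Fin n)}
    (hu : u ∈ W) :
    subsetProb p (lowBlock u W) (IsLowAt u W) ≤ 2 * binTail p (n - W.card) (degCut n) := by
  refine (subsetProb_or_le h0 h1 _ _).trans ?_
  rw [lowBlock, subsetProb_inter Finset.subset_union_left (fun B => B.card ≤ degCut n),
    subsetProb_inter Finset.subset_union_right (fun B => B.card ≤ degCut n)]
  have hout := subsetProb_card_le h0 h1 (outEdgesOff u W) (degCut n)
  have hin := subsetProb_card_le h0 h1 (inEdgesOff u W) (degCut n)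
  rw [card_outEdgesOff hu] at hout
  rw [card_inEdgesOff hu] at hin
  linarith

lemma subsetProb_mem_lowSet_le (h0 : 0 ≤ p) (h1 : p ≤ 1) (v : Fin n) :
    subsetProb p Finset.univ (fun D => v ∈ lowSet n D) ≤ 2 * binTail p (n - 1) (degCut n) :=
  calc subsetProb p Finset.univ (fun D => v ∈ lowSet n D)
      ≤ subsetProb p Finset.univ (fun D => IsLowAt v {v} (D ∩ lowBlock v {v})) :=
        subsetProb_mono h0 h1 fun _ _ h => isLowAt_of_mem_lowSet _ h
    _ = subsetProb p (lowBlock v {v}) (IsLowAt v {v}) :=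
        subsetProb_inter (Finset.subset_univ _) _
    _ ≤ 2 * binTail p (n - 1) (degCut n) := by
        simpa using subsetProb_isLowAt_le h0 h1 (Finset.mem_singleton_self v)

lemma card_edgesBetween_le (a b : Fin n) : (edgesBetween a b).card ≤ 2 :=
  (Finset.card_le_card_of_injOn (t := {(a, b), (b, a)}) Subtype.val
    (fun e he => by simpa [edgesBetween, Prod.ext_iff] using he)
    Subtype.val_injective.injOn).trans Finset.card_le_two

lemma prod_subsetProb_nonempty_edgesBetween_le {ι : Type*} (h0 : 0 ≤ p) (h1 : p ≤ 1)
    (s : Finset ι) (a b : ι → Fin n) :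
    ∏ i ∈ s, subsetProb p (edgesBetween (a i) (b i)) (fun B => B.Nonempty) ≤ (2 * p) ^ s.card := by
  rw [← Finset.prod_const]
  refine Finset.prod_le_prod (fun _ _ => subsetProb_nonneg h0 h1 _ _) fun i _ => ?_
  refine (subsetProb_nonempty_le h1 _).trans ?_
  exact mul_le_mul_of_nonneg_right (by exact_mod_cast card_edgesBetween_le _ _) h0

lemma edgesBetween_eq_pair {a b : Fin n} (hab : a ≠ b) :
    edgesBetween a b = {⟨(a, b), hab⟩, ⟨(b, a), hab.symm⟩} := by
  ext ⟨⟨x, y⟩, hxy⟩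
  simp only [edgesBetween, Finset.mem_filter, Finset.mem_univ, true_and, Finset.mem_insert,
    Finset.mem_singleton, Subtype.mk.injEq, Prod.mk.injEq]

lemma card_edgesBetween {a b : Fin n} (hab : a ≠ b) : (edgesBetween a b).card = 2 := by
  rw [edgesBetween_eq_pair hab, Finset.card_pair]
  simp [hab]

lemma nonempty_inter_edgesBetween {D : Finset (Eg n)} {a b : Fin n} (h : urel D a b) :
    (D ∩ edgesBetween a b).Nonempty := by
  rcases h with ⟨hab, hD⟩ | ⟨hba, hD⟩
  · exact ⟨_, Finset.mem_inter.2 ⟨hD, by simp [edgesBetween]⟩⟩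
  · exact ⟨_, Finset.mem_inter.2 ⟨hD, by simp [edgesBetween]⟩⟩

lemma inter_edgesBetween_eq {D : Finset (Eg n)} {a b : Fin n} (hab : drel D a b)
    (hba : drel D b a) : D ∩ edgesBetween a b = edgesBetween a b := by
  obtain ⟨hne, hab⟩ := hab
  obtain ⟨_, hba'⟩ := hba
  rw [Finset.inter_eq_right, edgesBetween_eq_pair hne]
  exact Finset.insert_subset hab (Finset.singleton_subset_iff.2 hba')

lemma disjoint_edgesBetween {a b c d : Fin n} (h1 : ¬(a = c ∧ b = d)) (h2 : ¬(a = d ∧ b = c)) :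
    Disjoint (edgesBetween a b) (edgesBetween c d) := by
  rw [Finset.disjoint_left]
  intro e he he'
  simp only [edgesBetween, Finset.mem_filter, Finset.mem_univ, true_and] at he he'
  rcases he with ⟨rfl, rfl⟩ | ⟨rfl, rfl⟩ <;> rcases he' with ⟨h, h'⟩ | ⟨h, h'⟩ <;> tauto

lemma disjoint_edgesBetween_lowBlock {a b u : Fin n} {W : Finset (Fin n)} (ha : a ∈ W)
    (hb : b ∈ W) : Disjoint (edgesBetween a b) (lowBlock u W) := by
  rw [Finset.disjoint_left]
  intro e he he'
  simp only [edgesBetween, lowBlock, outEdgesOff, inEdgesOff, Finset.mem_union,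
    Finset.mem_filter, Finset.mem_univ, true_and] at he he'
  rcases he with ⟨h, h'⟩ | ⟨h, h'⟩ <;> rw [h, h'] at he' <;> tauto

lemma disjoint_lowBlock {u v : Fin n} {W : Finset (Fin n)} (hv : v ∈ W)
    (huv : u ≠ v) : Disjoint (lowBlock u W) (lowBlock v W) := by
  rw [Finset.disjoint_left]
  intro e he he'
  simp only [lowBlock, outEdgesOff, inEdgesOff, Finset.mem_union,
    Finset.mem_filter, Finset.mem_univ, true_and] at he he'
  rcases he with ⟨h, h'⟩ | ⟨h, h'⟩ <;> rcases he' with ⟨k, k'⟩ | ⟨k, k'⟩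
  · exact huv (h.symm.trans k)
  · exact h' (k ▸ hv)
  · exact h' (k ▸ hv)
  · exact huv (h.symm.trans k)

end EdgeBlocks

section Patterns

variable {n : ℕ} {p : ℝ} {ι : Type*}

def patternBlock (f : ℕ → Fin n) (a b : ι → ℕ) (W : Finset (Fin n)) :
    ι ⊕ ℕ → Finset (Eg n) :=
  Sum.elim (fun i => edgesBetween (f (a i)) (f (b i))) fun k => lowBlock (f k) W

lemma pairwise_disjoint_patternBlock {m : ℕ} {f : ℕ → Fin n} (hf : Set.InjOn f (Set.Iio m))
    {s : Finset ι} {a b : ι → ℕ} (hab : ∀ i ∈ s, a i < m ∧ b i < m)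
    (hs : ∀ i ∈ s, ∀ j ∈ s, i ≠ j → ¬(a i = a j ∧ b i = b j) ∧ ¬(a i = b j ∧ b i = a j))
    {Z : Finset ℕ} (hZ : ∀ k ∈ Z, k < m) :
    ((s.disjSum Z : Finset (ι ⊕ ℕ)) : Set (ι ⊕ ℕ)).Pairwise fun x y =>
      Disjoint (patternBlock f a b ((Finset.range m).image f) x)
        (patternBlock f a b ((Finset.range m).image f) y) := by
  have hW : ∀ k < m, f k ∈ (Finset.range m).image f :=
    fun k hk => Finset.mem_image_of_mem f (Finset.mem_range.2 hk)
  rintro (i | k) hx (j | l) hy hxy <;>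
    simp only [Finset.mem_coe, Finset.inl_mem_disjSum, Finset.inr_mem_disjSum] at hx hy
  · have hi := hab i hx
    have hj := hab j hy
    obtain ⟨h1, h2⟩ := hs i hx j hy fun h => hxy (h ▸ rfl)
    refine disjoint_edgesBetween ?_ ?_
    · rwa [hf.eq_iff hi.1 hj.1, hf.eq_iff hi.2 hj.2]
    · rwa [hf.eq_iff hi.1 hj.2, hf.eq_iff hi.2 hj.1]
  · exact disjoint_edgesBetween_lowBlock (hW _ (hab i hx).1) (hW _ (hab i hx).2)
  · exact (disjoint_edgesBetween_lowBlock (hW _ (hab j hy).1) (hW _ (hab j hy).2)).symm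
  · refine disjoint_lowBlock (hW l (hZ l hy)) fun h => hxy ?_
    rw [hf.eq_iff (hZ k hx) (hZ l hy)] at h
    rw [h]

/-- Only the edges from `f '' [0, m)` to the rest of the graph matter for the degree conditions
(`isLowAt_of_mem_lowSet`), so all these events live on pairwise disjoint edge sets and are
independent. -/
lemma subsetProb_pattern_le [DecidableEq ι] (h0 : 0 ≤ p) (h1 : p ≤ 1) {m : ℕ}
    {f : ℕ → Fin n} (hf : Set.InjOn f (Set.Iio m)) (s : Finset ι) (a b : ι → ℕ)
    (hab : ∀ i ∈ s, a i < m ∧ b i < m)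
    (hs : ∀ i ∈ s, ∀ j ∈ s, i ≠ j → ¬(a i = a j ∧ b i = b j) ∧ ¬(a i = b j ∧ b i = a j))
    (Q : ι → Finset (Eg n) → Prop) (Z : Finset ℕ) (hZ : ∀ k ∈ Z, k < m) :
    subsetProb p Finset.univ (fun D => (∀ i ∈ s, Q i (D ∩ edgesBetween (f (a i)) (f (b i))))
        ∧ ∀ k ∈ Z, f k ∈ lowSet n D)
      ≤ (∏ i ∈ s, subsetProb p (edgesBetween (f (a i)) (f (b i))) (Q i))
        * (2 * binTail p (n - m) (degCut n)) ^ Z.card := by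
  set W := (Finset.range m).image f
  have hWcard : W.card = m := by
    rw [Finset.card_image_of_injOn (by simpa using hf), Finset.card_range]
  set R : ι ⊕ ℕ → Finset (Eg n) → Prop := Sum.elim Q fun k => IsLowAt (f k) W
  calc _ ≤ subsetProb p Finset.univ
          (fun D => ∀ x ∈ s.disjSum Z, R x (D ∩ patternBlock f a b W x)) :=
        subsetProb_mono h0 h1 fun D _ hD => by
          rintro (i | k) hx
          · exact hD.1 i (Finset.inl_mem_disjSum.1 hx)
          · exact isLowAt_of_mem_lowSet W (hD.2 k (Finset.inr_mem_disjSum.1 hx))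
    _ = ∏ x ∈ s.disjSum Z, subsetProb p (patternBlock f a b W x) (R x) :=
        subsetProb_forall_inter_eq_prod _ R _ (fun _ _ => Finset.subset_univ _)
          (pairwise_disjoint_patternBlock hf hab hs hZ)
    _ = (∏ i ∈ s, subsetProb p (edgesBetween (f (a i)) (f (b i))) (Q i))
          * ∏ k ∈ Z, subsetProb p (lowBlock (f k) W) (IsLowAt (f k) W) :=
        Finset.prod_disjSum _ _ _
    _ ≤ _ := by
        refine mul_le_mul_of_nonneg_left ?_
          (Finset.prod_nonneg fun _ _ => subsetProb_nonneg h0 h1 _ _)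
        rw [← Finset.prod_const]
        refine Finset.prod_le_prod (fun _ _ => subsetProb_nonneg h0 h1 _ _) fun k hk => ?_
        have hk' : f k ∈ W := Finset.mem_image_of_mem f (Finset.mem_range.2 (hZ k hk))
        simpa [hWcard] using subsetProb_isLowAt_le h0 h1 hk'

end Patterns

namespace List

variable {α : Type*}

lemma Nodup.injOn_getD {l : List α} (hl : l.Nodup) (d : α) :
    Set.InjOn (l.getD · d) (Set.Iio l.length) := fun i hi j hj h => by
  simp only [getD_eq_getElem _ _ (Set.mem_Iio.1 hi), getD_eq_getElem _ _ (Set.mem_Iio.1 hj)] at h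
  exact hl.getElem_inj_iff.1 h

lemma IsChain.rel_getD {R : α → α → Prop} {l : List α} (h : l.IsChain R) (d : α) {i : ℕ}
    (hi : i + 1 < l.length) : R (l.getD i d) (l.getD (i + 1) d) := by
  rw [getD_eq_getElem _ _ hi, getD_eq_getElem _ _ (by omega)]
  exact isChain_iff_getElem.1 h i hi

lemma IsChain.rel_getD_mod {R : α → α → Prop} {l : List α} (hne : l ≠ [])
    (h : (l ++ [l.head hne]).IsChain R) (d : α) {i : ℕ} (hi : i < l.length) :
    R (l.getD i d) (l.getD ((i + 1) % l.length) d) := by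
  have hR := h.rel_getD d (i := i) (by simpa using hi)
  rw [getD_append _ _ _ _ hi] at hR
  rcases Nat.lt_or_ge (i + 1) l.length with hlt | hge
  · rwa [Nat.mod_eq_of_lt hlt, ← getD_append _ [l.head hne] d _ hlt]
  · rw [getD_append_right _ _ _ _ hge, show i + 1 = l.length by omega, Nat.sub_self,
      getD_cons_zero, head_eq_getElem, ← getD_eq_getElem _ d] at hR
    rwa [show i + 1 = l.length by omega, Nat.mod_self]

end List

section ListPatterns

variable {n : ℕ} {p : ℝ}

lemma IsSPath.getD {D : Finset (Eg n)} {S : Set (Fin n)} {l : List (Fin n)}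
    (h : IsSPath D S l) (d : Fin n) :
    (∀ i ∈ Finset.range (l.length - 1), urel D (l.getD i d) (l.getD (i + 1) d))
      ∧ ∀ k ∈ ({0, l.length - 1} : Finset ℕ), l.getD k d ∈ S := by
  obtain ⟨-, hL, -, hchain, hends⟩ := h
  have hne : l ≠ [] := by rintro rfl; simp at hL
  refine ⟨fun i hi => hchain.rel_getD d (by simp at hi; omega), ?_⟩
  simp only [Finset.mem_insert, Finset.mem_singleton, forall_eq_or_imp, forall_eq]
  rw [List.getD_eq_getElem _ _ (by omega), List.getD_eq_getElem _ _ (by omega),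
    ← List.head_eq_getElem hne, ← List.getLast_eq_getElem hne]
  exact hends hne

lemma subsetProb_isSPath_le (h0 : 0 ≤ p) (h1 : p ≤ 1) (l : List (Fin n)) :
    subsetProb p Finset.univ (fun D => IsSPath D (lowSet n D) l)
      ≤ (2 * p) ^ (l.length - 1) * (2 * binTail p (n - l.length) (degCut n)) ^ 2 := by
  by_cases hl : l.Nodup ∧ 2 ≤ l.length
  swap
  · rw [subsetProb_of_forall_not fun D _ h => hl ⟨h.1, h.2.1⟩]
    exact mul_nonneg (pow_nonneg (by linarith) _) (sq_nonneg _)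
  obtain ⟨hnd, hL⟩ := hl
  have hne : l ≠ [] := by rintro rfl; simp at hL
  set d := l.head hne
  calc subsetProb p Finset.univ (fun D => IsSPath D (lowSet n D) l)
      ≤ subsetProb p Finset.univ (fun D =>
          (∀ i ∈ Finset.range (l.length - 1),
            (D ∩ edgesBetween (l.getD i d) (l.getD (i + 1) d)).Nonempty)
          ∧ ∀ k ∈ ({0, l.length - 1} : Finset ℕ), l.getD k d ∈ lowSet n D) :=
        subsetProb_mono h0 h1 fun D _ h =>
          ⟨fun i hi => nonempty_inter_edgesBetween ((h.getD d).1 i hi), (h.getD d).2⟩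
    _ ≤ (∏ i ∈ Finset.range (l.length - 1), subsetProb p
          (edgesBetween (l.getD i d) (l.getD (i + 1) d)) (fun B => B.Nonempty))
          * (2 * binTail p (n - l.length) (degCut n)) ^ ({0, l.length - 1} : Finset ℕ).card :=
        subsetProb_pattern_le h0 h1 (hnd.injOn_getD d) _ (fun i => i) (fun i => i + 1)
          (fun i hi => by simp at hi; omega) (fun i _ j _ hij => by omega) _ _
          (fun k hk => by simp at hk; omega)
    _ ≤ (2 * p) ^ (l.length - 1) * (2 * binTail p (n - l.length) (degCut n)) ^ 2 := by
        rw [Finset.card_pair (by omega)]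
        refine mul_le_mul_of_nonneg_right ?_ (sq_nonneg _)
        simpa using prod_subsetProb_nonempty_edgesBetween_le h0 h1 (Finset.range (l.length - 1))
          (fun i => l.getD i d) (fun i => l.getD (i + 1) d)

lemma subsetProb_digon_le (h0 : 0 ≤ p) (h1 : p ≤ 1) {f : ℕ → Fin n}
    (hf : Set.InjOn f (Set.Iio 2)) {j : ℕ} (hj : j < 2) :
    subsetProb p Finset.univ (fun D => drel D (f 0) (f 1) ∧ drel D (f 1) (f 0) ∧ f j ∈ lowSet n D)
      ≤ p ^ 2 * (2 * binTail p (n - 2) (degCut n)) := by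
  have hne : f 0 ≠ f 1 := fun h => by simpa using hf (by simp) (by simp) h
  calc _ ≤ subsetProb p Finset.univ (fun D =>
          (∀ i ∈ Finset.range 1, D ∩ edgesBetween (f 0) (f 1) = edgesBetween (f 0) (f 1))
          ∧ ∀ k ∈ ({j} : Finset ℕ), f k ∈ lowSet n D) :=
        subsetProb_mono h0 h1 fun D _ h => ⟨fun _ _ => inter_edgesBetween_eq h.1 h.2.1, by simpa
          using h.2.2⟩
    _ ≤ (∏ i ∈ Finset.range 1, subsetProb p (edgesBetween (f 0) (f 1))
          (fun B => B = edgesBetween (f 0) (f 1)))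
          * (2 * binTail p (n - 2) (degCut n)) ^ ({j} : Finset ℕ).card :=
        subsetProb_pattern_le h0 h1 hf _ (fun _ => 0) (fun _ => 1) (fun _ _ => by omega)
          (fun i hi j hj hij => by simp_all) (fun _ B => B = edgesBetween (f 0) (f 1)) _
          (by simpa using hj)
    _ = p ^ 2 * (2 * binTail p (n - 2) (degCut n)) := by
        simp [subsetProb_eq_self, card_edgesBetween hne]

lemma subsetProb_cycle_le (h0 : 0 ≤ p) (h1 : p ≤ 1) {L : ℕ} (hL : 3 ≤ L) {f : ℕ → Fin n}
    (hf : Set.InjOn f (Set.Iio L)) {j : ℕ} (hj : j < L) :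
    subsetProb p Finset.univ
        (fun D => (∀ i < L, urel D (f i) (f ((i + 1) % L))) ∧ f j ∈ lowSet n D)
      ≤ (2 * p) ^ L * (2 * binTail p (n - L) (degCut n)) := by
  have hmod : ∀ i < L, (i + 1) % L = if i + 1 = L then 0 else i + 1 := fun i hi => by
    split_ifs with h
    · rw [h, Nat.mod_self]
    · exact Nat.mod_eq_of_lt (by omega)
  calc _ ≤ subsetProb p Finset.univ (fun D =>
          (∀ i ∈ Finset.range L, (D ∩ edgesBetween (f i) (f ((i + 1) % L))).Nonempty)
          ∧ ∀ k ∈ ({j} : Finset ℕ), f k ∈ lowSet n D) :=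
        subsetProb_mono h0 h1 fun D _ h => ⟨fun i hi => nonempty_inter_edgesBetween
          (h.1 i (Finset.mem_range.1 hi)), by simpa using h.2⟩
    _ ≤ (∏ i ∈ Finset.range L, subsetProb p (edgesBetween (f i) (f ((i + 1) % L)))
          (fun B => B.Nonempty)) * (2 * binTail p (n - L) (degCut n)) ^ ({j} : Finset ℕ).card :=
        subsetProb_pattern_le h0 h1 hf _ (fun i => i) (fun i => (i + 1) % L)
          (fun i hi => ⟨Finset.mem_range.1 hi, Nat.mod_lt _ (by omega)⟩)
          (fun i hi k hk hik => by
            simp only [Finset.mem_range] at hi hk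
            rw [hmod i hi, hmod k hk]
            split_ifs <;> omega) _ _ (by simpa using hj)
    _ ≤ (2 * p) ^ L * (2 * binTail p (n - L) (degCut n)) := by
        rw [Finset.card_singleton, pow_one]
        refine mul_le_mul_of_nonneg_right ?_
          (mul_nonneg zero_le_two (binTail_nonneg h0 h1 _ _))
        simpa using prod_subsetProb_nonempty_edgesBetween_le h0 h1 (Finset.range L)
          f (fun i => f ((i + 1) % L))

lemma IsSCycle.getD {D : Finset (Eg n)} {S : Set (Fin n)} {l : List (Fin n)}
    (h : IsSCycle D S l) (d : Fin n) :
    ∃ j < l.length, l.getD j d ∈ S ∧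
      ((l.length = 2 ∧ drel D (l.getD 0 d) (l.getD 1 d) ∧ drel D (l.getD 1 d) (l.getD 0 d))
        ∨ (3 ≤ l.length ∧ ∀ i < l.length, urel D (l.getD i d) (l.getD ((i + 1) % l.length) d))) := by
  obtain ⟨-, ⟨v, hv, hvS⟩, hcase⟩ := h
  obtain ⟨j, hj, rfl⟩ := List.mem_iff_getElem.1 hv
  refine ⟨j, hj, by rwa [List.getD_eq_getElem _ _ hj], ?_⟩
  rcases hcase with ⟨a, b, rfl, hab, hba⟩ | ⟨hL, -, hchain⟩
  · exact Or.inl ⟨rfl, hab, hba⟩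
  · exact Or.inr ⟨hL, fun i hi => (hchain (List.ne_nil_of_mem hv)).rel_getD_mod _ d hi⟩

lemma subsetProb_isSCycle_le (h0 : 0 ≤ p) (h1 : p ≤ 1) (l : List (Fin n)) :
    subsetProb p Finset.univ (fun D => IsSCycle D (lowSet n D) l)
      ≤ l.length * ((2 * p) ^ l.length * (2 * binTail p (n - l.length) (degCut n))) := by
  have hbound : 0 ≤ (2 * p) ^ l.length * (2 * binTail p (n - l.length) (degCut n)) :=
    mul_nonneg (pow_nonneg (by linarith) _) (mul_nonneg zero_le_two (binTail_nonneg h0 h1 _ _))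
  by_cases hl : l.Nodup ∧ l ≠ []
  swap
  · rw [subsetProb_of_forall_not fun D _ h => hl ⟨h.1, by
      obtain ⟨v, hv, -⟩ := h.2.1
      exact List.ne_nil_of_mem hv⟩]
    exact mul_nonneg (Nat.cast_nonneg _) hbound
  obtain ⟨hnd, hne⟩ := hl
  set d := l.head hne
  refine (subsetProb_le_sum h0 h1 (Finset.range l.length) (fun j D => l.getD j d ∈ lowSet n D ∧
      ((l.length = 2 ∧ drel D (l.getD 0 d) (l.getD 1 d) ∧ drel D (l.getD 1 d) (l.getD 0 d))
        ∨ (3 ≤ l.length ∧ ∀ i < l.length,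
          urel D (l.getD i d) (l.getD ((i + 1) % l.length) d)))) _ fun D _ h => ?_).trans ?_
  · obtain ⟨j, hj, hjS, hcase⟩ := h.getD d
    exact ⟨j, Finset.mem_range.2 hj, hjS, hcase⟩
  refine (Finset.sum_le_card_nsmul _ _ ((2 * p) ^ l.length * (2 * binTail p (n - l.length)
    (degCut n))) fun j hj => ?_).trans (le_of_eq (by simp [nsmul_eq_mul]))
  rw [Finset.mem_range] at hj
  rcases lt_trichotomy l.length 2 with hL | hL | hL
  · rw [subsetProb_of_forall_not fun D _ h => by omega]
    exact hbound
  · have hdigon := subsetProb_digon_le h0 h1 (hL ▸ hnd.injOn_getD d) (hL ▸ hj)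
    rw [hL]
    refine (subsetProb_mono h0 h1 fun D _ h => ?_).trans (hdigon.trans ?_)
    · obtain ⟨hjS, ⟨-, hab, hba⟩ | ⟨h3, -⟩⟩ := h
      exacts [⟨hab, hba, hjS⟩, by omega]
    · refine mul_le_mul_of_nonneg_right (by nlinarith) ?_
      exact mul_nonneg zero_le_two (binTail_nonneg h0 h1 _ _)
  · refine (subsetProb_mono h0 h1 fun D _ h => ?_).trans
      (subsetProb_cycle_le h0 h1 hL (hnd.injOn_getD d) hj)
    obtain ⟨hjS, ⟨h2, -⟩ | ⟨-, hcyc⟩⟩ := h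
    exacts [by omega, ⟨hcyc, hjS⟩]

end ListPatterns

section BadEvents

variable {n : ℕ} {p : ℝ}

lemma subsetProb_exists_isSPath_le (h0 : 0 ≤ p) (h1 : p ≤ 1) :
    subsetProb p Finset.univ (fun D => ∃ l, IsSPath D (lowSet n D) l)
      ≤ ∑ L ∈ Finset.Icc 2 5,
          (n : ℝ) ^ L * ((2 * p) ^ (L - 1) * (2 * binTail p (n - L) (degCut n)) ^ 2) := by
  refine (subsetProb_le_sum h0 h1 (Finset.Icc 2 5)
    (fun L D => ∃ l, l.length = L ∧ IsSPath D (lowSet n D) l) _ fun D _ ⟨l, hl⟩ =>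
      ⟨l.length, Finset.mem_Icc.2 ⟨hl.2.1, hl.2.2.1⟩, l, rfl, hl⟩).trans
    (Finset.sum_le_sum fun L _ => ?_)
  simpa using subsetProb_exists_list_le (β := Fin n) h0 h1 Finset.univ L _ _
    fun l hl => hl ▸ subsetProb_isSPath_le h0 h1 l

lemma IsSCycle.length_mem {D : Finset (Eg n)} {S : Set (Fin n)} {l : List (Fin n)}
    (h : IsSCycle D S l) : l.length ∈ Finset.Icc 2 4 := by
  rcases h.2.2 with ⟨a, b, rfl, -⟩ | ⟨h3, h4, -⟩
  · simp
  · exact Finset.mem_Icc.2 ⟨by omega, h4⟩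

lemma subsetProb_exists_isSCycle_le (h0 : 0 ≤ p) (h1 : p ≤ 1) :
    subsetProb p Finset.univ (fun D => ∃ l, IsSCycle D (lowSet n D) l)
      ≤ ∑ L ∈ Finset.Icc 2 4,
          (n : ℝ) ^ L * (L * ((2 * p) ^ L * (2 * binTail p (n - L) (degCut n)))) := by
  refine (subsetProb_le_sum h0 h1 (Finset.Icc 2 4)
    (fun L D => ∃ l, l.length = L ∧ IsSCycle D (lowSet n D) l) _ fun D _ ⟨l, hl⟩ =>
      ⟨l.length, hl.length_mem, l, rfl, hl⟩).trans (Finset.sum_le_sum fun L _ => ?_)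
  simpa using subsetProb_exists_list_le (β := Fin n) h0 h1 Finset.univ L _ _
    fun l hl => hl ▸ subsetProb_isSCycle_le h0 h1 l

lemma rpow_mul_subsetProb_lowSet_le (h0 : 0 ≤ p) (h1 : p ≤ 1) :
    (n : ℝ) ^ ((1 : ℝ) / 3)
        * subsetProb p Finset.univ (fun D => (n : ℝ) ^ ((1 : ℝ) / 3) < (lowSet n D).ncard)
      ≤ n * (2 * binTail p (n - 1) (degCut n)) := by
  classical
  calc _ ≤ ∑ v : Fin n, subsetProb p Finset.univ (fun D => v ∈ lowSet n D) :=
        mul_subsetProb_le_sum h0 h1 Finset.univ _ _ _ fun D _ h => by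
          rw [← Set.ncard_coe_finset, Finset.coe_filter]
          simpa using h.le
    _ ≤ ∑ _v : Fin n, 2 * binTail p (n - 1) (degCut n) :=
        Finset.sum_le_sum fun v _ => subsetProb_mem_lowSet_le h0 h1 v
    _ = n * (2 * binTail p (n - 1) (degCut n)) := by simp

end BadEvents

section TailEstimate

open Nat in
lemma pow_div_factorial_le_of_le {y : ℝ} (hy : 0 ≤ y) {j K : ℕ} (hjK : j ≤ K) (hKy : (K : ℝ) ≤ y) :
    y ^ j / j ! ≤ y ^ K / K ! := by
  induction K, hjK using Nat.le_induction with
  | base => exact le_rfl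
  | succ K _ ih =>
    push_cast at hKy
    refine (ih (by linarith)).trans ?_
    rw [pow_succ, Nat.factorial_succ, Nat.cast_mul, mul_comm ((K + 1 : ℕ) : ℝ),
      ← _root_.div_mul_div_comm, Nat.cast_add_one]
    exact le_mul_of_one_le_right (by positivity) ((one_le_div (by positivity)).2 hKy)

open Nat in
lemma binTail_le_mul_exp {p : ℝ} (h0 : 0 ≤ p) (h1 : p ≤ 1) {m K : ℕ} {y : ℝ} (hKm : K ≤ m)
    (hKy : (K : ℝ) ≤ y) (hmy : m * p ≤ y) :
    binTail p m K ≤ (K + 1) * (y ^ K / K !) * Real.exp (-(p * (m - K))) := by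
  have hy : 0 ≤ y := (Nat.cast_nonneg K).trans hKy
  have hq : (1 - p) ^ (m - K) ≤ Real.exp (-(p * (m - K))) := by
    calc (1 - p) ^ (m - K) ≤ Real.exp (-p) ^ (m - K) :=
          pow_le_pow_left₀ (by linarith) (by linarith [Real.add_one_le_exp (-p)]) _
      _ = Real.exp (-(p * (m - K))) := by
          rw [← Real.exp_nat_mul, Nat.cast_sub hKm]
          ring_nf
  calc binTail p m K
      ≤ ∑ _j ∈ Finset.range (K + 1), y ^ K / K ! * Real.exp (-(p * (m - K))) := by
        refine Finset.sum_le_sum fun j hj => ?_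
        have hjK : j ≤ K := Nat.lt_succ_iff.1 (Finset.mem_range.1 hj)
        have hchoose : (m.choose j : ℝ) * p ^ j ≤ y ^ j / j ! :=
          calc (m.choose j : ℝ) * p ^ j ≤ m ^ j / j ! * p ^ j :=
                mul_le_mul_of_nonneg_right (Nat.choose_le_pow_div j m) (pow_nonneg h0 j)
            _ = (m * p) ^ j / j ! := by ring
            _ ≤ y ^ j / j ! := by gcongr
        refine mul_le_mul (hchoose.trans (pow_div_factorial_le_of_le hy hjK hKy))
          ((pow_le_pow_of_le_one (by linarith) (by linarith) (by omega)).trans hq)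
          (pow_nonneg (by linarith) _) (by positivity)
    _ = (K + 1) * (y ^ K / K !) * Real.exp (-(p * (m - K))) := by
        rw [Finset.sum_const, Finset.card_range, nsmul_eq_mul]
        push_cast
        ring

open Nat in
lemma pow_div_factorial_le_pow_mul_exp {y c : ℝ} (hy : 0 ≤ y) (hc : 0 ≤ c) {K : ℕ}
    (hyK : y ≤ c * K) : y ^ K / K ! ≤ c ^ K * Real.exp K := by
  calc y ^ K / K ! ≤ (c * K) ^ K / K ! := by gcongr
    _ = c ^ K * ((K : ℝ) ^ K / K !) := by ring
    _ ≤ c ^ K * Real.exp K :=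
        mul_le_mul_of_nonneg_left (Real.pow_div_factorial_le_exp _ (Nat.cast_nonneg K) K)
          (pow_nonneg hc K)

lemma log_eighteen_lt : Real.log 18 < 29 / 10 := by
  rw [show (18 : ℝ) = 2 * 3 ^ 2 by norm_num, Real.log_mul (by norm_num) (by norm_num),
    Real.log_pow]
  have := Real.log_two_lt_d9
  have := Real.log_three_lt_d9
  norm_num at *
  linarith

noncomputable def edgeProb (n : ℕ) : ℝ := 7 * Real.log n / (8 * n)

lemma edgeProb_nonneg (n : ℕ) : 0 ≤ edgeProb n :=
  div_nonneg (mul_nonneg (by norm_num) (Real.log_natCast_nonneg n)) (by positivity)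

lemma edgeProb_le_one (n : ℕ) : edgeProb n ≤ 1 := by
  rcases Nat.eq_zero_or_pos n with rfl | hn
  · simp [edgeProb]
  have hn' : (0 : ℝ) < n := by exact_mod_cast hn
  rw [edgeProb, div_le_one (by positivity)]
  linarith [Real.log_le_sub_one_of_pos hn']

lemma edgeProb_mul_self {n : ℕ} (hn : n ≠ 0) : edgeProb n * n = 7 * Real.log n / 8 := by
  rw [edgeProb]
  field_simp

lemma natCast_eq_exp_log {n : ℕ} (hx : 0 < Real.log n) : (n : ℝ) = Real.exp (Real.log n) := by
  refine (Real.exp_log (Nat.cast_pos.2 (Nat.pos_of_ne_zero fun hn => ?_))).symm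
  simp [hn] at hx

/-- The mean degree `n p = 7 log n / 8` costs `exp(-(7/8) log n)` (up to a factor `699/700`),
while the `K ≤ log n / 20` allowed successes gain at most `(18 e)^K ≤ exp((39/200) log n)`;
`27/40` is what is left. -/
lemma binTail_edgeProb_le {n m : ℕ} (hx : 720 ≤ Real.log n) (hm : n ≤ m + 5) (hmn : m ≤ n) :
    binTail (edgeProb n) m (degCut n) ≤ Real.log n * Real.exp (-(27 / 40) * Real.log n) := by
  set x := Real.log n
  set K := degCut n
  set p := edgeProb n
  have hn : (n : ℝ) = Real.exp x := natCast_eq_exp_log (by linarith)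
  have hn_big : 700 * (5 + x / 20) ≤ n := by
    nlinarith [Real.quadratic_le_exp_of_nonneg (by linarith : (0 : ℝ) ≤ x)]
  have hn0 : n ≠ 0 := by rintro rfl; simp at hn_big; linarith
  have hpn : p * n = 7 * x / 8 := edgeProb_mul_self hn0
  have hp0 : 0 ≤ p := edgeProb_nonneg n
  have hKx : (K : ℝ) ≤ x / 20 := Nat.floor_le (by linarith)
  have hKx' : x / 20 - 1 < K := Nat.sub_one_lt_floor _
  have hm' : (n : ℝ) ≤ m + 5 := by exact_mod_cast hm
  have hmn' : (m : ℝ) ≤ n := by exact_mod_cast hmn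
  have hKm : K ≤ m := by exact_mod_cast (show (K : ℝ) ≤ m by linarith)
  have h18 : (18 : ℝ) ^ K ≤ Real.exp (29 / 10 * K) := by
    rw [← Real.exp_log (by norm_num : (0 : ℝ) < 18), ← Real.exp_nat_mul]
    exact Real.exp_le_exp.2 (by nlinarith [log_eighteen_lt, Nat.cast_nonneg (α := ℝ) K])
  have hpmK : 7 * x / 8 * (699 / 700) ≤ p * (m - K) := by
    nlinarith [mul_le_mul_of_nonneg_left (show (n : ℝ) / 700 ≤ m - K by linarith) hp0]
  calc binTail p m K
      ≤ (K + 1) * ((7 * x / 8) ^ K / K.factorial) * Real.exp (-(p * (m - K))) :=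
        binTail_le_mul_exp hp0 (edgeProb_le_one n) hKm (by linarith)
          (by nlinarith [mul_le_mul_of_nonneg_left hmn' hp0])
    _ ≤ x * (Real.exp (29 / 10 * K) * Real.exp K) * Real.exp (-(p * (m - K))) := by
        gcongr
        · linarith
        · exact (pow_div_factorial_le_pow_mul_exp (by linarith) (by norm_num)
            (by linarith)).trans (mul_le_mul_of_nonneg_right h18 (Real.exp_nonneg _))
    _ = x * Real.exp (39 / 10 * K - p * (m - K)) := by
        rw [mul_assoc, ← Real.exp_add, ← Real.exp_add]
        ring_nf
    _ ≤ x * Real.exp (-(27 / 40) * x) := by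
        gcongr
        linarith

end TailEstimate

section Asymptotics

open Filter Topology

lemma eventually_le_log (c : ℝ) : ∀ᶠ n : ℕ in atTop, c ≤ Real.log n :=
  (Real.tendsto_log_atTop.comp tendsto_natCast_atTop_atTop).eventually_ge_atTop c

lemma tendsto_zero_of_le_log_pow_mul_exp {f : ℕ → ℝ} (hf : ∀ n, 0 ≤ f n) (c : ℝ) (k : ℕ)
    {b : ℝ} (hb : 0 < b)
    (h : ∀ᶠ n : ℕ in atTop, f n ≤ c * (Real.log n ^ k * Real.exp (-b * Real.log n))) :
    Tendsto f atTop (𝓝 0) := by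
  have hlim := ((tendsto_rpow_mul_exp_neg_mul_atTop_nhds_zero k b hb).comp
    (Real.tendsto_log_atTop.comp tendsto_natCast_atTop_atTop)).const_mul c
  rw [mul_zero] at hlim
  exact squeeze_zero' (Eventually.of_forall hf) h
    (by simpa only [Function.comp_def, Real.rpow_natCast] using hlim)

lemma natCast_mul_two_mul_edgeProb_pow_le {n : ℕ} (hx : 720 ≤ Real.log n) {j : ℕ} (hj : j ≤ 4) :
    (n : ℝ) ^ j * (2 * edgeProb n) ^ j ≤ 16 * Real.log n ^ 4 := by
  have hn : n ≠ 0 := by rintro rfl; simp at hx; linarith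
  rw [← mul_pow, show (n : ℝ) * (2 * edgeProb n) = 7 * Real.log n / 4 by
    rw [mul_comm, mul_assoc, edgeProb_mul_self hn]; ring]
  calc (7 * Real.log n / 4) ^ j ≤ (2 * Real.log n) ^ j :=
        pow_le_pow_left₀ (by positivity) (by linarith) j
    _ ≤ (2 * Real.log n) ^ 4 := pow_le_pow_right₀ (by linarith) hj
    _ = 16 * Real.log n ^ 4 := by ring

lemma subsetProb_exists_isSPath_edgeProb_le {n : ℕ} (hx : 720 ≤ Real.log n) :
    subsetProb (edgeProb n) Finset.univ (fun D : Finset (Eg n) => ∃ l, IsSPath D (lowSet n D) l)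
      ≤ 256 * (Real.log n ^ 6 * Real.exp (-(7 / 20) * Real.log n)) := by
  set x := Real.log n
  have hn : (n : ℝ) = Real.exp x := natCast_eq_exp_log (by linarith)
  refine (subsetProb_exists_isSPath_le (edgeProb_nonneg n) (edgeProb_le_one n)).trans
    ((Finset.sum_le_card_nsmul _ _ (64 * (x ^ 6 * Real.exp (-(7 / 20) * x))) fun L hL => ?_).trans
      (le_of_eq (by simp; ring)))
  obtain ⟨hL2, hL5⟩ := Finset.mem_Icc.1 hL
  obtain ⟨j, rfl⟩ : ∃ j, L = j + 1 := ⟨L - 1, by omega⟩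
  have hbt := binTail_edgeProb_le (m := n - (j + 1)) hx (by omega) (by omega)
  have hexp : Real.exp x * Real.exp (-(27 / 40) * x) ^ 2 = Real.exp (-(7 / 20) * x) := by
    rw [sq, ← Real.exp_add, ← Real.exp_add]
    ring_nf
  calc (n : ℝ) ^ (j + 1) * ((2 * edgeProb n) ^ (j + 1 - 1)
        * (2 * binTail (edgeProb n) (n - (j + 1)) (degCut n)) ^ 2)
      = n * ((n : ℝ) ^ j * (2 * edgeProb n) ^ j)
        * (2 * binTail (edgeProb n) (n - (j + 1)) (degCut n)) ^ 2 := by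
        rw [Nat.add_sub_cancel]
        ring
    _ ≤ n * (16 * x ^ 4) * (2 * (x * Real.exp (-(27 / 40) * x))) ^ 2 := by
        have hbt0 := binTail_nonneg (edgeProb_nonneg n) (edgeProb_le_one n) (n - (j + 1)) (degCut n)
        refine mul_le_mul (mul_le_mul_of_nonneg_left
          (natCast_mul_two_mul_edgeProb_pow_le hx (by omega)) (Nat.cast_nonneg n))
          (pow_le_pow_left₀ (by positivity) (by linarith) 2) (sq_nonneg _) (by positivity)
    _ = 64 * (x ^ 6 * Real.exp (-(7 / 20) * x)) := by
        rw [hn]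
        linear_combination 64 * x ^ 6 * hexp

lemma subsetProb_exists_isSCycle_edgeProb_le {n : ℕ} (hx : 720 ≤ Real.log n) :
    subsetProb (edgeProb n) Finset.univ (fun D : Finset (Eg n) => ∃ l, IsSCycle D (lowSet n D) l)
      ≤ 384 * (Real.log n ^ 5 * Real.exp (-(27 / 40) * Real.log n)) := by
  set x := Real.log n
  refine (subsetProb_exists_isSCycle_le (edgeProb_nonneg n) (edgeProb_le_one n)).trans
    ((Finset.sum_le_card_nsmul _ _ (128 * (x ^ 5 * Real.exp (-(27 / 40) * x))) fun L hL => ?_).trans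
      (le_of_eq (by simp; ring)))
  obtain ⟨hL2, hL4⟩ := Finset.mem_Icc.1 hL
  have hbt := binTail_edgeProb_le (m := n - L) hx (by omega) (by omega)
  calc (n : ℝ) ^ L * (L * ((2 * edgeProb n) ^ L * (2 * binTail (edgeProb n) (n - L) (degCut n))))
      = ((n : ℝ) ^ L * (2 * edgeProb n) ^ L) * L
        * (2 * binTail (edgeProb n) (n - L) (degCut n)) := by ring
    _ ≤ (16 * x ^ 4) * 4 * (2 * (x * Real.exp (-(27 / 40) * x))) := by
        have hbt0 := binTail_nonneg (edgeProb_nonneg n) (edgeProb_le_one n) (n - L) (degCut n)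
        refine mul_le_mul (mul_le_mul (natCast_mul_two_mul_edgeProb_pow_le hx hL4)
          (by exact_mod_cast hL4) (Nat.cast_nonneg _) (by positivity)) (by linarith)
          (by positivity) (by positivity)
    _ = 128 * (x ^ 5 * Real.exp (-(27 / 40) * x)) := by ring

lemma subsetProb_lowSet_large_edgeProb_le {n : ℕ} (hx : 720 ≤ Real.log n) :
    subsetProb (edgeProb n) Finset.univ
        (fun D : Finset (Eg n) => (n : ℝ) ^ ((1 : ℝ) / 3) < (lowSet n D).ncard)
      ≤ 2 * (Real.log n * Real.exp (-(1 / 120) * Real.log n)) := by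
  set x := Real.log n
  have hn : (n : ℝ) = Real.exp x := natCast_eq_exp_log (by linarith)
  have hcube : (n : ℝ) ^ ((1 : ℝ) / 3) = Real.exp (x / 3) := by
    rw [Real.rpow_def_of_pos (by rw [hn]; exact Real.exp_pos x)]
    exact congrArg Real.exp (by ring)
  have hbt := binTail_edgeProb_le (m := n - 1) hx (by omega) (by omega)
  have hmarkov := rpow_mul_subsetProb_lowSet_le (n := n) (edgeProb_nonneg n) (edgeProb_le_one n)
  have hexp : Real.exp x * Real.exp (-(27 / 40) * x)
      = Real.exp (x / 3) * Real.exp (-(1 / 120) * x) := by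
    rw [← Real.exp_add, ← Real.exp_add]
    ring_nf
  refine le_of_mul_le_mul_left ?_ (Real.exp_pos (x / 3))
  rw [← hcube]
  calc _ ≤ (n : ℝ) * (2 * binTail (edgeProb n) (n - 1) (degCut n)) := hmarkov
    _ ≤ Real.exp x * (2 * (x * Real.exp (-(27 / 40) * x))) := by
        rw [hn]
        gcongr
    _ = (n : ℝ) ^ ((1 : ℝ) / 3) * (2 * (x * Real.exp (-(1 / 120) * x))) := by
        rw [hcube]
        linear_combination 2 * x * hexp

lemma tendsto_subsetProb_exists_isSPath :
    Tendsto (fun n => subsetProb (edgeProb n) Finset.univ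
      (fun D : Finset (Eg n) => ∃ l, IsSPath D (lowSet n D) l)) atTop (𝓝 0) :=
  tendsto_zero_of_le_log_pow_mul_exp
    (fun n => subsetProb_nonneg (edgeProb_nonneg n) (edgeProb_le_one n) _ _) 256 6
    (b := 7 / 20) (by norm_num) ((eventually_le_log 720).mono fun _ => subsetProb_exists_isSPath_edgeProb_le)

lemma tendsto_subsetProb_exists_isSCycle :
    Tendsto (fun n => subsetProb (edgeProb n) Finset.univ
      (fun D : Finset (Eg n) => ∃ l, IsSCycle D (lowSet n D) l)) atTop (𝓝 0) :=
  tendsto_zero_of_le_log_pow_mul_exp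
    (fun n => subsetProb_nonneg (edgeProb_nonneg n) (edgeProb_le_one n) _ _) 384 5
    (b := 27 / 40) (by norm_num) ((eventually_le_log 720).mono fun _ => subsetProb_exists_isSCycle_edgeProb_le)

lemma tendsto_subsetProb_lowSet_large :
    Tendsto (fun n => subsetProb (edgeProb n) Finset.univ
      (fun D : Finset (Eg n) => (n : ℝ) ^ ((1 : ℝ) / 3) < (lowSet n D).ncard)) atTop (𝓝 0) :=
  tendsto_zero_of_le_log_pow_mul_exp
    (fun n => subsetProb_nonneg (edgeProb_nonneg n) (edgeProb_le_one n) _ _) 2 1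
    (b := 1 / 120) (by norm_num) ((eventually_le_log 720).mono fun _ hx => by
      simpa using subsetProb_lowSet_large_edgeProb_le hx)

end Asymptotics

/-- **Lemma 7.7.**  For `p = 7 log n/(8n)`, almost surely in `D(n,p)`, with
`S = {v : d⁺(v) < log n/20 or d⁻(v) < log n/20}`, there are no `S`-paths or `S`-cycles and
`|S| ≤ n^(1/3)`. -/
theorem no_S_paths_or_cycles :
    Filter.Tendsto
      (fun n : ℕ => dnpProb n (7 * Real.log n / (8 * n)) (fun D : Finset (Eg n) =>
        (∀ l : List (Fin n), ¬ IsSPath D (lowSet n D) l) ∧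
        (∀ l : List (Fin n), ¬ IsSCycle D (lowSet n D) l) ∧
        ((lowSet n D).ncard : ℝ) ≤ (n : ℝ) ^ ((1 : ℝ) / 3)))
      Filter.atTop (nhds 1) := by
  have hbad := (tendsto_subsetProb_exists_isSPath.add tendsto_subsetProb_exists_isSCycle).add
    tendsto_subsetProb_lowSet_large
  rw [add_zero, add_zero] at hbad
  have hlower := (tendsto_const_nhds (x := (1 : ℝ))).sub hbad
  rw [sub_zero] at hlower
  refine tendsto_of_tendsto_of_tendsto_of_le_of_le hlower tendsto_const_nhds (fun n => ?_)
    fun n => ?_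
  · rw [dnpProb_eq_subsetProb]
    refine (one_sub_add_add_le_subsetProb (edgeProb_nonneg n) (edgeProb_le_one n) _ _ _ _).trans_eq
      (subsetProb_congr fun D _ => ?_)
    simp only [not_exists, not_lt]
  · rw [dnpProb_eq_subsetProb]
    exact subsetProb_le_one (edgeProb_nonneg n) (edgeProb_le_one n) _ _
end
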